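/- arXiv:2603.29371 — 9 statements merged into one kernel-verified Lean document; each statement's English description precedes it below -/
import Mathlib

section
/- Let f : (a,b) → ℝ, with (a,b) ⊂ (0,∞), be a C³ solution of f''/(1+(f')²) = (r − (n−1)/r)·f' − f − λ·√(1+(f')²) which is not constant. If f''(c) = 0 at some c ∈ (a,b), then f'(c)·f'''(c) > 0. -/
/-!
If `f'(c) = 0` as well as `f''(c) = 0`, the equation forces `f(c) = -λ`, so `f` has the same
initial data at `c` as the constant solution `-λ`; a Grönwall estimate for `(f + λ, f')` on
compact subintervals shows `f ≡ -λ`, which is excluded. Hence `f'(c) ≠ 0`, and differentiating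
the equation at `c`, where `f'' = 0`, leaves `f'''(c) = (1 + f'(c)²) (n - 1) f'(c) / c²`.
-/

open Set Filter Topology

lemma eq_zero_of_norm_deriv_le_mul_norm {E : Type*} [NormedAddCommGroup E] [NormedSpace ℝ E]
    {u u' : ℝ → E} {K c x : ℝ} (hu : ∀ t ∈ uIcc c x, HasDerivAt u (u' t) t)
    (bound : ∀ t ∈ uIcc c x, ‖u' t‖ ≤ K * ‖u t‖) (hc : u c = 0) : u x = 0 := by
  rcases le_total c x with hcx | hxc
  · rw [uIcc_of_le hcx] at hu bound
    exact eq_zero_of_abs_deriv_le_mul_abs_self_of_eq_zero_right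
      (fun t ht => (hu t ht).continuousAt.continuousWithinAt)
      (fun t ht => (hu t (Ico_subset_Icc_self ht)).hasDerivWithinAt) hc
      (fun t ht => bound t (Ico_subset_Icc_self ht)) x ⟨hcx, le_rfl⟩
  · rw [uIcc_of_ge hxc] at hu bound
    have hmem : ∀ t ∈ Icc (-c) (-x), -t ∈ Icc x c := fun t ht =>
      ⟨le_neg.1 ht.2, neg_le.1 ht.1⟩
    have hneg : ∀ t ∈ Icc (-c) (-x), HasDerivAt (fun s => u (-s)) (-u' (-t)) t := fun t ht => by
      simpa [Function.comp_def] using (hu (-t) (hmem t ht)).scomp t (hasDerivAt_neg' t)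
    simpa using eq_zero_of_abs_deriv_le_mul_abs_self_of_eq_zero_right
      (fun t ht => (hneg t ht).continuousAt.continuousWithinAt)
      (fun t ht => (hneg t (Ico_subset_Icc_self ht)).hasDerivWithinAt) (by simpa using hc)
      (fun t ht => by simpa using bound (-t) (hmem t (Ico_subset_Icc_self ht)))
      (-x) ⟨neg_le_neg hxc, le_rfl⟩

lemma sqrt_one_add_sq_le (x : ℝ) : √(1 + x ^ 2) ≤ 1 + |x| :=
  Real.sqrt_le_iff.2 ⟨by positivity, by nlinarith [sq_abs x, abs_nonneg x]⟩

lemma abs_ode_rhs_mul_le {q p y lam Q M : ℝ} (hq : |q| ≤ Q) (hp : |p| ≤ M) :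
    |(q * p - y - lam * √(1 + p ^ 2)) * (1 + p ^ 2)| ≤
      (Q + 1 + |lam|) * (1 + M ^ 2) * max |y + lam| |p| := by
  set m := max |y + lam| |p|
  have hQ : 0 ≤ Q := (abs_nonneg q).trans hq
  have hym : |y + lam| ≤ m := le_max_left _ _
  have hpm : |p| ≤ m := le_max_right _ _
  have hsqrt : |√(1 + p ^ 2) - 1| ≤ |p| := by
    rw [abs_of_nonneg (sub_nonneg.2 (Real.one_le_sqrt.2 (by nlinarith [sq_nonneg p])))]
    linarith [sqrt_one_add_sq_le p]
  -- expand around the rest point `y = -lam, p = 0`, where the right-hand side vanishes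
  have hrhs : |q * p - y - lam * √(1 + p ^ 2)| ≤ (Q + 1 + |lam|) * m :=
    calc |q * p - y - lam * √(1 + p ^ 2)|
        = |q * p - (y + lam) - lam * (√(1 + p ^ 2) - 1)| := by ring_nf
      _ ≤ |q| * |p| + |y + lam| + |lam| * |√(1 + p ^ 2) - 1| := by
        rw [← abs_mul, ← abs_mul]
        linarith [abs_sub (q * p - (y + lam)) (lam * (√(1 + p ^ 2) - 1)),
          abs_sub (q * p) (y + lam)]
      _ ≤ Q * m + m + |lam| * m := by
        gcongr
        exact hsqrt.trans hpm
      _ = (Q + 1 + |lam|) * m := by ring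
  have hp2 : 1 + p ^ 2 ≤ 1 + M ^ 2 := by nlinarith [sq_abs p, abs_nonneg p]
  rw [abs_mul, abs_of_pos (by positivity : (0 : ℝ) < 1 + p ^ 2)]
  calc |q * p - y - lam * √(1 + p ^ 2)| * (1 + p ^ 2)
      ≤ (Q + 1 + |lam|) * m * (1 + M ^ 2) := by gcongr
    _ = (Q + 1 + |lam|) * (1 + M ^ 2) * m := by ring

lemma exists_norm_deriv_le_mul_norm {q f : ℝ → ℝ} {lam : ℝ} {s : Set ℝ} (hs : IsCompact s)
    (hq : ContinuousOn q s) (hf' : ContinuousOn (deriv f) s)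
    (hode : ∀ r ∈ s, deriv (deriv f) r / (1 + deriv f r ^ 2) =
      q r * deriv f r - f r - lam * √(1 + deriv f r ^ 2)) :
    ∃ K, ∀ r ∈ s, ‖(deriv f r, deriv (deriv f) r)‖ ≤ K * ‖(f r + lam, deriv f r)‖ := by
  obtain ⟨Q, hQ⟩ := hs.exists_bound_of_continuousOn hq
  obtain ⟨M, hM⟩ := hs.exists_bound_of_continuousOn hf'
  refine ⟨max 1 ((Q + 1 + |lam|) * (1 + M ^ 2)), fun r hr => ?_⟩
  simp only [Prod.norm_def, Real.norm_eq_abs] at hQ hM ⊢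
  have hm : 0 ≤ max |f r + lam| |deriv f r| := le_max_of_le_left (abs_nonneg _)
  have hf'' : deriv (deriv f) r =
      (q r * deriv f r - f r - lam * √(1 + deriv f r ^ 2)) * (1 + deriv f r ^ 2) :=
    (div_eq_iff (by positivity)).1 (hode r hr)
  refine max_le ?_ ?_
  · calc |deriv f r| ≤ 1 * max |f r + lam| |deriv f r| := by simp
      _ ≤ _ := by gcongr; exact le_max_left _ _
  · rw [hf'']
    exact (abs_ode_rhs_mul_le (hQ r hr) (hM r hr)).trans (by gcongr; exact le_max_right _ _)

theorem eq_neg_of_deriv_eq_zero {q f : ℝ → ℝ} {lam a b c : ℝ} (hc : c ∈ Ioo a b)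
    (hq : ContinuousOn q (Ioo a b)) (hf : ∀ r ∈ Ioo a b, DifferentiableAt ℝ f r)
    (hf' : ∀ r ∈ Ioo a b, DifferentiableAt ℝ (deriv f) r)
    (hode : ∀ r ∈ Ioo a b, deriv (deriv f) r / (1 + deriv f r ^ 2) =
      q r * deriv f r - f r - lam * √(1 + deriv f r ^ 2))
    (hfc : f c = -lam) (hf'c : deriv f c = 0) : ∀ r ∈ Ioo a b, f r = -lam := by
  intro r hr
  have hsub : uIcc c r ⊆ Ioo a b := ordConnected_Ioo.uIcc_subset hc hr
  obtain ⟨K, hK⟩ := exists_norm_deriv_le_mul_norm isCompact_uIcc (hq.mono hsub)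
    (fun t ht => (hf' t (hsub ht)).continuousAt.continuousWithinAt)
    (fun t ht => hode t (hsub ht))
  have h := eq_zero_of_norm_deriv_le_mul_norm (u := fun t => (f t + lam, deriv f t))
    (fun t ht => ((hf t (hsub ht)).hasDerivAt.add_const lam).prodMk (hf' t (hsub ht)).hasDerivAt)
    hK (by simp [hfc, hf'c])
  rw [Prod.mk_eq_zero] at h
  linarith [h.1]

theorem deriv_deriv_deriv_div_eq_of_ode {f : ℝ → ℝ} {m lam r : ℝ} (hr : r ≠ 0) (hf : DifferentiableAt ℝ f r)
    (hf' : DifferentiableAt ℝ (deriv f) r)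
    (hode : ∀ᶠ s in 𝓝 r, deriv (deriv f) s / (1 + deriv f s ^ 2) =
      (s - m / s) * deriv f s - f s - lam * √(1 + deriv f s ^ 2)) :
    deriv (deriv (deriv f)) r / (1 + deriv f r ^ 2) =
      2 * deriv f r * deriv (deriv f) r ^ 2 / (1 + deriv f r ^ 2) ^ 2
        + (r - m / r) * deriv (deriv f) r + m / r ^ 2 * deriv f r
        - lam * deriv f r * deriv (deriv f) r / √(1 + deriv f r ^ 2) := by
  have hpos : ∀ s, 0 < 1 + deriv f s ^ 2 := fun s => by positivity
  have hf'' : deriv (deriv f) =ᶠ[𝓝 r] fun s =>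
      ((s - m / s) * deriv f s - f s - lam * √(1 + deriv f s ^ 2)) * (1 + deriv f s ^ 2) :=
    hode.mono fun s hs => (div_eq_iff (hpos s).ne').1 hs
  have hp : HasDerivAt (deriv f) (deriv (deriv f) r) r := hf'.hasDerivAt
  have hsq : HasDerivAt (fun s => 1 + deriv f s ^ 2) (2 * deriv f r * deriv (deriv f) r) r := by
    simpa using (hp.pow 2).const_add 1
  have hcoef : HasDerivAt (fun s => s - m / s) (1 - m * -(r ^ 2)⁻¹) r :=
    (hasDerivAt_id' r).sub ((hasDerivAt_inv hr).const_mul m)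
  have hrhs : HasDerivAt (fun s =>
      ((s - m / s) * deriv f s - f s - lam * √(1 + deriv f s ^ 2)) * (1 + deriv f s ^ 2)) _ r :=
    (((hcoef.mul hp).sub hf.hasDerivAt).sub ((hsq.sqrt (hpos r).ne').const_mul lam)).mul hsq
  rw [hf''.deriv_eq, hrhs.deriv, div_eq_iff (hpos r).ne']
  simp only [Pi.sub_apply, Pi.mul_apply]
  rw [← hode.self_of_nhds]
  field_simp
  ring

theorem stmt_4_general (n : ℕ) (hn : 2 ≤ n) (lam a b c : ℝ)
    (ha : 0 < a) (hc : c ∈ Set.Ioo a b)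
    (f : ℝ → ℝ)
    (hreg : ∀ r ∈ Set.Ioo a b, DifferentiableAt ℝ f r ∧ DifferentiableAt ℝ (deriv f) r ∧
      DifferentiableAt ℝ (deriv (deriv f)) r)
    (hode : ∀ r ∈ Set.Ioo a b,
      deriv (deriv f) r / (1 + (deriv f r) ^ 2) =
        (r - ((n : ℝ) - 1) / r) * deriv f r - f r - lam * Real.sqrt (1 + (deriv f r) ^ 2))
    (hnc : ¬ ∃ k : ℝ, ∀ r ∈ Set.Ioo a b, f r = k)
    (h2 : deriv (deriv f) c = 0) :
    0 < deriv f c * deriv (deriv (deriv f)) c := by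
  have hc0 : 0 < c := ha.trans hc.1
  have hn1 : (0 : ℝ) < n - 1 := by
    have : (2 : ℝ) ≤ n := by exact_mod_cast hn
    linarith
  have hf'c : deriv f c ≠ 0 := by
    intro hf'c
    have hfc : f c = -lam := by
      have := hode c hc
      norm_num [h2, hf'c] at this
      linarith
    have hq : ContinuousOn (fun r => r - ((n : ℝ) - 1) / r) (Ioo a b) :=
      continuousOn_id.sub (continuousOn_const.div continuousOn_id
        fun r hr => (ha.trans hr.1).ne')
    exact hnc ⟨-lam, eq_neg_of_deriv_eq_zero hc hq (fun r hr => (hreg r hr).1)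
      (fun r hr => (hreg r hr).2.1) hode hfc hf'c⟩
  have h3 := deriv_deriv_deriv_div_eq_of_ode hc0.ne' (hreg c hc).1 (hreg c hc).2.1
    (eventually_of_mem (Ioo_mem_nhds hc.1 hc.2) hode)
  norm_num [h2] at h3
  rw [div_eq_iff (by positivity)] at h3
  have hpos : 0 < ((n : ℝ) - 1) / c ^ 2 * deriv f c ^ 2 * (1 + deriv f c ^ 2) := by
    positivity
  rw [h3]
  convert hpos using 1
  ring

/-- For a non-constant C³ solution of
`f''/(1+(f')²) = (r − (n−1)/r)f' − f − λ√(1+(f')²)` on `(a,b) ⊂ (0,∞)`,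
if `f''(c) = 0` then `f'(c)·f'''(c) > 0`. -/
theorem stmt_4 (n : ℕ) (hn : 2 ≤ n) (lam a b c : ℝ)
    (ha : 0 < a) (hab : a < b) (hc : c ∈ Set.Ioo a b)
    (f : ℝ → ℝ)
    (hreg : ∀ r ∈ Set.Ioo a b, DifferentiableAt ℝ f r ∧ DifferentiableAt ℝ (deriv f) r ∧
      DifferentiableAt ℝ (deriv (deriv f)) r)
    (hode : ∀ r ∈ Set.Ioo a b,
      deriv (deriv f) r / (1 + (deriv f r) ^ 2) =
        (r - ((n : ℝ) - 1) / r) * deriv f r - f r - lam * Real.sqrt (1 + (deriv f r) ^ 2))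
    (hnc : ¬ ∃ k : ℝ, ∀ r ∈ Set.Ioo a b, f r = k)
    (h2 : deriv (deriv f) c = 0) :
    0 < deriv f c * deriv (deriv (deriv f)) c :=
  stmt_4_general n hn lam a b c ha hc f hreg hode hnc h2
end

section
/- Let f : (a,b) → ℝ, with (a,b) ⊂ (0,∞), be a C³ solution of f''/(1+(f')²) = (r − (n−1)/r)·f' − f − λ·√(1+(f')²). If f'(c)·f''(c) < 0 at some point c ∈ (a,b), then f'(r)·f''(r) < 0 for all r ∈ (a, c]. -/
/-!
Going leftwards from `c`, let `t` be the first point where `f'·f''` fails to be negative. On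
`(t, c]` the function `(f')²` is strictly decreasing, so `f'(t) ≠ 0`, while `f'(t)·f''(t) = 0` by
continuity; hence `t` is an inflection point. Differentiating the equation there gives
`f'''(t) = (1 + f'(t)²)·(n - 1)/t²·f'(t)`, so `(f'·f'')'(t) = f'(t)·f'''(t) > 0` and `f'·f''` is
positive just to the right of `t`, a contradiction.
-/

open Set Filter Topology

theorem ContinuousOn.forall_mem_Ioc_neg_of_extends_left {p : ℝ → ℝ} {a c : ℝ}
    (hp : ContinuousOn p (Ioc a c)) (hc : p c < 0)
    (hstep : ∀ t ∈ Ioo a c, (∀ s ∈ Ioc t c, p s < 0) → p t < 0) :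
    ∀ r ∈ Ioc a c, p r < 0 := by
  intro r hr
  by_contra! hr0
  have hclosed : IsClosed (Icc r c ∩ p ⁻¹' Ici 0) :=
    (hp.mono (Icc_subset_Ioc hr.1 le_rfl)).preimage_isClosed_of_isClosed isClosed_Icc isClosed_Ici
  obtain ⟨t, ⟨⟨hrt, htc⟩, ht0⟩, hmax⟩ := (isCompact_Icc.of_isClosed_subset hclosed
    inter_subset_left).exists_isGreatest ⟨r, left_mem_Icc.2 hr.2, hr0⟩
  have htc' : t < c := htc.lt_of_ne (by rintro rfl; exact (not_lt.2 ht0) hc)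
  have hright : ∀ s ∈ Ioc t c, p s < 0 := fun s hs => by
    by_contra! h
    exact (hmax ⟨⟨hrt.trans hs.1.le, hs.2⟩, h⟩).not_gt hs.1
  exact (not_lt.2 ht0) (hstep t ⟨hr.1.trans_le hrt, htc'⟩ hright)

theorem ne_zero_of_forall_mul_deriv_neg {u : ℝ → ℝ} {t c : ℝ} (htc : t < c)
    (hu : ContinuousOn u (Icc t c)) (hneg : ∀ s ∈ Ioo t c, u s * deriv u s < 0) : u t ≠ 0 := by
  have hanti : StrictAntiOn (fun s => u s ^ 2) (Icc t c) := by
    refine strictAntiOn_of_deriv_neg (convex_Icc t c) (hu.pow 2) fun s hs => ?_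
    rw [interior_Icc] at hs
    have hd := differentiableAt_of_deriv_ne_zero (right_ne_zero_of_mul (hneg s hs).ne)
    rw [(hd.hasDerivAt.fun_pow 2).deriv]
    norm_num [mul_assoc]
    linarith [hneg s hs]
  intro h0
  have := hanti (left_mem_Icc.2 htc.le) (right_mem_Icc.2 htc.le) htc
  simp only [h0] at this
  nlinarith [sq_nonneg (u c)]

theorem HasDerivAt.eventually_nhdsGT_lt {p : ℝ → ℝ} {t d : ℝ} (hp : HasDerivAt p d t)
    (hd : 0 < d) : ∀ᶠ s in 𝓝[>] t, p t < p s := by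
  filter_upwards [(nhdsGT_le_nhdsNE t) ((hasDerivAt_iff_tendsto_slope.mp hp).eventually
    (eventually_gt_nhds hd)), self_mem_nhdsWithin] with s hs hts
  exact (slope_pos_iff_of_le (le_of_lt hts)).1 hs

theorem hasDerivAt_deriv_deriv_of_inflection {n : ℕ} {lam t : ℝ} {f : ℝ → ℝ} (ht : t ≠ 0)
    (hf : DifferentiableAt ℝ f t) (hf' : HasDerivAt (deriv f) 0 t)
    (hode : ∀ᶠ r in 𝓝 t, deriv (deriv f) r / (1 + deriv f r ^ 2) =
      (r - ((n : ℝ) - 1) / r) * deriv f r - f r - lam * √(1 + deriv f r ^ 2)) :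
    HasDerivAt (deriv (deriv f)) ((1 + deriv f t ^ 2) * (((n : ℝ) - 1) / t ^ 2 * deriv f t)) t := by
  have hQ : HasDerivAt (fun r => 1 + deriv f r ^ 2) 0 t := by
    simpa using (hf'.fun_pow 2).const_add 1
  have hR : HasDerivAt (fun r => r - ((n : ℝ) - 1) / r) (1 + ((n : ℝ) - 1) / t ^ 2) t :=
    ((hasDerivAt_id' t).sub ((hasDerivAt_const t _).div (hasDerivAt_id' t) ht)).congr_deriv
      (by ring)
  have hN : HasDerivAt (fun r => (r - ((n : ℝ) - 1) / r) * deriv f r - f r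
      - lam * √(1 + deriv f r ^ 2)) (((n : ℝ) - 1) / t ^ 2 * deriv f t) t :=
    (((hR.mul hf').sub hf.hasDerivAt).sub ((hQ.sqrt (by positivity)).const_mul lam)).congr_deriv
      (by ring)
  have heq : deriv (deriv f) =ᶠ[𝓝 t] fun r => (1 + deriv f r ^ 2) *
      ((r - ((n : ℝ) - 1) / r) * deriv f r - f r - lam * √(1 + deriv f r ^ 2)) :=
    hode.mono fun r hr => by simp only; rw [← hr]; field_simp
  exact ((hQ.mul hN).congr_of_eventuallyEq heq).congr_deriv (by ring)

theorem deriv_mul_deriv_deriv_neg_of_forall_Ioc {n : ℕ} {lam t c : ℝ} {f : ℝ → ℝ} (hn : 2 ≤ n)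
    (ht : 0 < t) (htc : t < c) (hf : DifferentiableAt ℝ f t)
    (hf' : ∀ s ∈ Icc t c, DifferentiableAt ℝ (deriv f) s)
    (hf'' : ContinuousAt (deriv (deriv f)) t)
    (hode : ∀ᶠ r in 𝓝 t, deriv (deriv f) r / (1 + deriv f r ^ 2) =
      (r - ((n : ℝ) - 1) / r) * deriv f r - f r - lam * √(1 + deriv f r ^ 2))
    (hneg : ∀ s ∈ Ioc t c, deriv f s * deriv (deriv f) s < 0) :
    deriv f t * deriv (deriv f) t < 0 := by
  have hf't := hf' t (left_mem_Icc.2 htc.le)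
  have hright : ∀ᶠ s in 𝓝[>] t, deriv f s * deriv (deriv f) s < 0 :=
    eventually_of_mem (Ioc_mem_nhdsGT htc) hneg
  have hle : deriv f t * deriv (deriv f) t ≤ 0 :=
    le_of_tendsto ((hf't.continuousAt.mul hf'').tendsto.mono_left nhdsWithin_le_nhds)
      (hright.mono fun _ hs => hs.le)
  refine hle.lt_of_ne fun hzero => ?_
  have hu : deriv f t ≠ 0 := ne_zero_of_forall_mul_deriv_neg htc
    (fun s hs => (hf' s hs).continuousAt.continuousWithinAt)
    (fun s hs => hneg s (Ioo_subset_Ioc_self hs))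
  have hinfl : deriv (deriv f) t = 0 := (mul_eq_zero.1 hzero).resolve_left hu
  have h3 := hasDerivAt_deriv_deriv_of_inflection ht.ne' hf (hinfl ▸ hf't.hasDerivAt) hode
  have hp := (hf't.hasDerivAt.fun_mul h3).congr_deriv (show _ = ((n : ℝ) - 1) / t ^ 2 *
    (1 + deriv f t ^ 2) * deriv f t ^ 2 by rw [hinfl]; ring)
  have hn1 : (0 : ℝ) < (n : ℝ) - 1 := by
    have : (2 : ℝ) ≤ n := by exact_mod_cast hn
    linarith
  obtain ⟨s, hlt, hs⟩ := ((hp.eventually_nhdsGT_lt (by positivity)).and hright).exists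
  linarith

theorem stmt_5_general (n : ℕ) (hn : 2 ≤ n) (lam a b c : ℝ)
    (ha : 0 < a) (hc : c ∈ Set.Ioo a b)
    (f : ℝ → ℝ)
    (hreg : ∀ r ∈ Set.Ioo a b, DifferentiableAt ℝ f r ∧ DifferentiableAt ℝ (deriv f) r ∧
      DifferentiableAt ℝ (deriv (deriv f)) r)
    (hode : ∀ r ∈ Set.Ioo a b,
      deriv (deriv f) r / (1 + (deriv f r) ^ 2) =
        (r - ((n : ℝ) - 1) / r) * deriv f r - f r - lam * Real.sqrt (1 + (deriv f r) ^ 2))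
    (hneg : deriv f c * deriv (deriv f) c < 0) :
    ∀ r ∈ Set.Ioc a c, deriv f r * deriv (deriv f) r < 0 := by
  have hsub : Ioc a c ⊆ Ioo a b := fun r hr => ⟨hr.1, hr.2.trans_lt hc.2⟩
  refine ContinuousOn.forall_mem_Ioc_neg_of_extends_left (fun r hr => ?_) hneg
    fun t ht hright => ?_
  · obtain ⟨-, hf', hf''⟩ := hreg r (hsub hr)
    exact (hf'.continuousAt.mul hf''.continuousAt).continuousWithinAt
  · have htb : t ∈ Ioo a b := hsub (Ioo_subset_Ioc_self ht)
    exact deriv_mul_deriv_deriv_neg_of_forall_Ioc hn (ha.trans ht.1) ht.2 (hreg t htb).1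
      (fun s hs => (hreg s (hsub ⟨ht.1.trans_le hs.1, hs.2⟩)).2.1) (hreg t htb).2.2.continuousAt
      (eventually_of_mem (Ioo_mem_nhds htb.1 htb.2) hode) hright

/-- For a C³ solution of `f''/(1+(f')²) = (r − (n−1)/r)f' − f − λ√(1+(f')²)` on
`(a,b) ⊂ (0,∞)`: if `f'(c)·f''(c) < 0` at some `c ∈ (a,b)`, then `f'·f'' < 0` on `(a,c]`. -/
theorem stmt_5 (n : ℕ) (hn : 2 ≤ n) (lam a b c : ℝ)
    (ha : 0 < a) (hab : a < b) (hc : c ∈ Set.Ioo a b)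
    (f : ℝ → ℝ)
    (hreg : ∀ r ∈ Set.Ioo a b, DifferentiableAt ℝ f r ∧ DifferentiableAt ℝ (deriv f) r ∧
      DifferentiableAt ℝ (deriv (deriv f)) r)
    (hode : ∀ r ∈ Set.Ioo a b,
      deriv (deriv f) r / (1 + (deriv f r) ^ 2) =
        (r - ((n : ℝ) - 1) / r) * deriv f r - f r - lam * Real.sqrt (1 + (deriv f r) ^ 2))
    (hneg : deriv f c * deriv (deriv f) c < 0) :
    ∀ r ∈ Set.Ioc a c, deriv f r * deriv (deriv f) r < 0 :=
  stmt_5_general n hn lam a b c ha hc f hreg hode hneg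
end

section
/- Let f : (a,b) → ℝ, with (a,b) ⊂ (0,∞), be a C³ solution of f''/(1+(f')²) = (r − (n−1)/r)·f' − f − λ·√(1+(f')²). If f'(c)·f''(c) > 0 at some point c ∈ (a,b), then f'(r)·f''(r) > 0 for all r ∈ [c, b). -/
open Set Filter Topology

/-! Let `g = f' f''`. At a first zero `r > c` of `g`, `(f'²)' = 2g > 0` on `[c, r)` forces
`f'(r) ≠ 0`, hence `f''(r) = 0`. Differentiating the equation at such an inflection point gives
`f''' = (1 + f'²) (n - 1) / r² f'`, so `g'(r) = f''² + f' f''' > 0`; but `g` decreases to its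
zero from the left, so `g'(r) ≤ 0`. -/

lemma HasDerivAt.nonpos_of_eq_zero_of_pos_left {g : ℝ → ℝ} {g' x c : ℝ} (hg : HasDerivAt g g' x)
    (hx : g x = 0) (hc : c < x) (hpos : ∀ s ∈ Ioo c x, 0 < g s) : g' ≤ 0 := by
  have hslope : Tendsto (slope g x) (𝓝[<] x) (𝓝 g') :=
    (hasDerivAt_iff_tendsto_slope_left_right.mp hg).1
  refine le_of_tendsto hslope ?_
  filter_upwards [Ioo_mem_nhdsLT hc] with s hs
  rw [slope_def_field, hx, sub_zero]
  exact div_nonpos_of_nonneg_of_nonpos (hpos s hs).le (by linarith [hs.2])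

lemma exists_first_zero_of_pos_of_nonpos {g : ℝ → ℝ} {c t : ℝ} (hct : c ≤ t)
    (hg : ContinuousOn g (Icc c t)) (hc : 0 < g c) (ht : g t ≤ 0) :
    ∃ r ∈ Ioc c t, g r = 0 ∧ ∀ s ∈ Ico c r, 0 < g s := by
  obtain ⟨r, ⟨hr, hgr⟩, hleast⟩ : ∃ r, IsLeast (Icc c t ∩ g ⁻¹' {0}) r :=
    (isCompact_Icc.of_isClosed_subset
      (hg.preimage_isClosed_of_isClosed isClosed_Icc isClosed_singleton) inter_subset_left)
      |>.exists_isLeast (intermediate_value_Icc' hct hg ⟨ht, hc.le⟩)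
  have hcr : c < r := hr.1.lt_of_ne (by rintro rfl; simp_all)
  refine ⟨r, ⟨hcr, hr.2⟩, hgr, fun s hs => ?_⟩
  by_contra! hgs
  obtain ⟨z, hz, hgz⟩ := intermediate_value_Icc' hs.1 (hg.mono (Icc_subset_Icc le_rfl
    (hs.2.le.trans hr.2))) ⟨hgs, hc.le⟩
  exact (hleast ⟨⟨hz.1, hz.2.trans (hs.2.le.trans hr.2)⟩, hgz⟩).not_gt (hz.2.trans_lt hs.2)

lemma forall_pos_of_ne_zero_of_pos_before {g : ℝ → ℝ} {c b : ℝ} (hg : ContinuousOn g (Ico c b))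
    (hc : 0 < g c) (hfirst : ∀ r ∈ Ioo c b, (∀ s ∈ Ico c r, 0 < g s) → g r ≠ 0) :
    ∀ r ∈ Ico c b, 0 < g r := by
  intro t ht
  by_contra! hgt
  obtain ⟨r, hr, hgr, hbefore⟩ :=
    exists_first_zero_of_pos_of_nonpos ht.1 (hg.mono (Icc_subset_Ico_right ht.2)) hc hgt
  exact hfirst r ⟨hr.1, hr.2.trans_lt ht.2⟩ hbefore hgr

lemma sq_lt_sq_of_mul_deriv_pos {u v : ℝ → ℝ} {c r : ℝ} (hcr : c < r)
    (hu : ∀ s ∈ Icc c r, HasDerivAt u (v s) s) (huv : ∀ s ∈ Ico c r, 0 < u s * v s) :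
    u c ^ 2 < u r ^ 2 := by
  have hmono : StrictMonoOn (fun s => u s ^ 2) (Icc c r) := by
    refine strictMonoOn_of_deriv_pos (convex_Icc c r)
      (fun s hs => ((hu s hs).continuousAt.pow 2).continuousWithinAt) fun s hs => ?_
    rw [interior_Icc] at hs
    rw [((hu s (Ioo_subset_Icc_self hs)).fun_pow 2).deriv]
    simpa [mul_assoc] using mul_pos two_pos (huv s (Ioo_subset_Ico_self hs))
  exact hmono (left_mem_Icc.mpr hcr.le) (right_mem_Icc.mpr hcr.le) hcr

lemma hasDerivAt_deriv_deriv_of_deriv_deriv_eq_zero {f : ℝ → ℝ} {m lam r₀ : ℝ} (hr₀ : r₀ ≠ 0)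
    (hf : DifferentiableAt ℝ f r₀) (hf' : DifferentiableAt ℝ (deriv f) r₀)
    (hode : ∀ᶠ r in 𝓝 r₀, deriv (deriv f) r / (1 + deriv f r ^ 2) =
      (r - m / r) * deriv f r - f r - lam * √(1 + deriv f r ^ 2))
    (hinfl : deriv (deriv f) r₀ = 0) :
    HasDerivAt (deriv (deriv f)) ((1 + deriv f r₀ ^ 2) * (m / r₀ ^ 2 * deriv f r₀)) r₀ := by
  set u := deriv f
  have hu : HasDerivAt u 0 r₀ := hinfl ▸ hf'.hasDerivAt
  have hweight : HasDerivAt (fun r => 1 + u r ^ 2) 0 r₀ := by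
    simpa using (hu.pow 2).const_add 1
  have hsqrt : HasDerivAt (fun r => √(1 + u r ^ 2)) 0 r₀ := by
    simpa using hweight.sqrt (by positivity)
  have hcoef : HasDerivAt (fun r => r - m / r) (1 + m / r₀ ^ 2) r₀ := by
    refine ((hasDerivAt_id' r₀).fun_sub
      ((hasDerivAt_const r₀ m).fun_div (hasDerivAt_id' r₀) hr₀)).congr_deriv ?_
    ring
  have hrhs :=
    hweight.fun_mul (((hcoef.fun_mul hu).fun_sub hf.hasDerivAt).fun_sub (hsqrt.const_mul lam))
  refine (hrhs.congr_of_eventuallyEq ?_).congr_deriv ?_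
  · filter_upwards [hode] with r hr
    rw [← hr]
    field_simp
  · field_simp
    ring

theorem stmt_6_general (n : ℕ) (hn : 2 ≤ n) (lam a b c : ℝ)
    (ha : 0 < a) (hc : c ∈ Set.Ioo a b)
    (f : ℝ → ℝ)
    (hreg : ∀ r ∈ Set.Ioo a b, DifferentiableAt ℝ f r ∧ DifferentiableAt ℝ (deriv f) r ∧
      DifferentiableAt ℝ (deriv (deriv f)) r)
    (hode : ∀ r ∈ Set.Ioo a b,
      deriv (deriv f) r / (1 + (deriv f r) ^ 2) =
        (r - ((n : ℝ) - 1) / r) * deriv f r - f r - lam * Real.sqrt (1 + (deriv f r) ^ 2))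
    (hpos : 0 < deriv f c * deriv (deriv f) c) :
    ∀ r ∈ Set.Ico c b, 0 < deriv f r * deriv (deriv f) r := by
  have hsub : Ico c b ⊆ Ioo a b := fun r hr => ⟨hc.1.trans_le hr.1, hr.2⟩
  refine forall_pos_of_ne_zero_of_pos_before (fun r hr => ?_) hpos fun r hr hbefore hzero => ?_
  · obtain ⟨-, hf', hf''⟩ := hreg r (hsub hr)
    exact (hf'.continuousAt.mul hf''.continuousAt).continuousWithinAt
  have hrab : r ∈ Ioo a b := hsub (Ioo_subset_Ico_self hr)
  obtain ⟨hf, hf', -⟩ := hreg r hrab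
  have hu : deriv f r ≠ 0 := by
    have hsq := sq_lt_sq_of_mul_deriv_pos hr.1
      (fun s hs => (hreg s (hsub ⟨hs.1, hs.2.trans_lt hr.2⟩)).2.1.hasDerivAt) hbefore
    exact fun h => by nlinarith [sq_nonneg (deriv f c)]
  have hinfl : deriv (deriv f) r = 0 := (mul_eq_zero.mp hzero).resolve_left hu
  have hr₀ : 0 < r := ha.trans hrab.1
  have h3 := hasDerivAt_deriv_deriv_of_deriv_deriv_eq_zero hr₀.ne' hf hf'
    (eventually_of_mem (isOpen_Ioo.mem_nhds hrab) hode) hinfl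
  have hm : 0 < ((n : ℝ) - 1) / r ^ 2 := by
    have : (2 : ℝ) ≤ n := by exact_mod_cast hn
    exact div_pos (by linarith) (by positivity)
  refine (hf'.hasDerivAt.mul h3).nonpos_of_eq_zero_of_pos_left hzero hr.1
    (fun s hs => hbefore s (Ioo_subset_Ico_self hs)) |>.not_gt ?_
  rw [hinfl, mul_zero, zero_add]
  calc 0 < (1 + deriv f r ^ 2) * (((n : ℝ) - 1) / r ^ 2) * deriv f r ^ 2 :=
        mul_pos (mul_pos (by positivity) hm) (pow_two_pos_of_ne_zero hu)
    _ = _ := by ring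

/-- For a C³ solution of `f''/(1+(f')²) = (r − (n−1)/r)f' − f − λ√(1+(f')²)` on
`(a,b) ⊂ (0,∞)`: if `f'(c)·f''(c) > 0` at some `c ∈ (a,b)`, then `f'·f'' > 0` on `[c,b)`. -/
theorem stmt_6 (n : ℕ) (hn : 2 ≤ n) (lam a b c : ℝ)
    (ha : 0 < a) (hab : a < b) (hc : c ∈ Set.Ioo a b)
    (f : ℝ → ℝ)
    (hreg : ∀ r ∈ Set.Ioo a b, DifferentiableAt ℝ f r ∧ DifferentiableAt ℝ (deriv f) r ∧
      DifferentiableAt ℝ (deriv (deriv f)) r)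
    (hode : ∀ r ∈ Set.Ioo a b,
      deriv (deriv f) r / (1 + (deriv f r) ^ 2) =
        (r - ((n : ℝ) - 1) / r) * deriv f r - f r - lam * Real.sqrt (1 + (deriv f r) ^ 2))
    (hpos : 0 < deriv f c * deriv (deriv f) c) :
    ∀ r ∈ Set.Ico c b, 0 < deriv f r * deriv (deriv f) r :=
  stmt_6_general n hn lam a b c ha hc f hreg hode hpos
end

section
/- Let f : (a,b) → ℝ be a non-constant C³ solution of f''/(1+(f')²) = (r − (n−1)/r)·f' − f − λ·√(1+(f')²) on (a,b) ⊂ (0,∞), and suppose f'(c) = 0 for some c ∈ (a,b). Then either f''(r) < 0 for all r ∈ (a,b), or f''(r) > 0 for all r ∈ (a,b). Moreover, in the first case f' > 0 on (a,c) and f' < 0 on (c,b), while in the second case f' < 0 on (a,c) and f' > 0 on (c,b). -/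
/-!
With `g = f'` and `h = f''`, differentiating the equation gives the linear system `g' = h`,
`h' = A h + B g` with `B = (n - 1)(1 + g²)/r² > 0`. If `g c = 0 < h c`, then `h` cannot vanish to
the right of `c`: at a first zero `d`, `g` has increased, so `h' d = B d · g d > 0`, whereas `h`
decreases to `0` at `d`. The reflection `r ↦ -r` gives the left side, the sign change `(g, h) ↦
(-g, -h)` the case `h c < 0`, and `h c = 0` is excluded by uniqueness for the linear system, which
would make `f' ≡ 0` and hence `f` constant.
-/

open Set Filter

lemma HasDerivAt.nonpos_of_forall_lt_of_mem_Ioo {f : ℝ → ℝ} {f' c d : ℝ}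
    (hf : HasDerivAt f f' d) (hcd : c < d) (hlt : ∀ t ∈ Ioo c d, f d < f t) : f' ≤ 0 := by
  refine le_of_tendsto (hasDerivAt_iff_tendsto_slope_left_right.mp hf).1 ?_
  filter_upwards [Ioo_mem_nhdsLT hcd] with t ht
  rw [slope_def_field]
  exact (div_neg_of_pos_of_neg (sub_pos.2 (hlt t ht)) (sub_neg.2 ht.2)).le

lemma exists_first_zero_of_continuousOn {h : ℝ → ℝ} {c x : ℝ} (hcx : c ≤ x)
    (hh : ContinuousOn h (Icc c x)) (hc : 0 < h c) (hx : h x ≤ 0) :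
    ∃ d ∈ Ioc c x, h d = 0 ∧ ∀ t ∈ Ico c d, 0 < h t := by
  set Z := Icc c x ∩ h ⁻¹' Iic 0
  have hZ : IsCompact Z :=
    isCompact_Icc.of_isClosed_subset (hh.preimage_isClosed_of_isClosed isClosed_Icc isClosed_Iic)
      inter_subset_left
  obtain ⟨d, ⟨hd, hdZ⟩, hleast⟩ := hZ.exists_isLeast ⟨x, ⟨hcx, le_rfl⟩, hx⟩
  have hpos : ∀ t ∈ Ico c d, 0 < h t := fun t ht => by
    by_contra! hle
    exact (hleast ⟨⟨ht.1, ht.2.le.trans hd.2⟩, hle⟩).not_gt ht.2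
  have hcd : c < d := hd.1.lt_of_ne (by rintro rfl; exact (hdZ.trans_lt hc).false)
  obtain ⟨t, ht, ht0⟩ := intermediate_value_Icc' hd.1 (hh.mono (Icc_subset_Icc_right hd.2))
    ⟨hdZ, hc.le⟩
  have htd : t = d := le_antisymm ht.2 (hleast ⟨⟨ht.1, ht.2.trans hd.2⟩, ht0.le⟩)
  exact ⟨d, ⟨hcd, hd.2⟩, htd ▸ ht0, hpos⟩

lemma lipschitzWith_companion {α β : ℝ} {K : NNReal} (hK : 1 + |α| + |β| ≤ K) :
    LipschitzWith K (fun p : ℝ × ℝ => (p.2, α * p.2 + β * p.1)) := by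
  refine LipschitzWith.of_dist_le_mul fun p q => ?_
  simp only [Prod.dist_eq, Real.dist_eq]
  set D := max |p.1 - q.1| |p.2 - q.2|
  have h1 : |p.1 - q.1| ≤ D := le_max_left _ _
  have h2 : |p.2 - q.2| ≤ D := le_max_right _ _
  have hD : 0 ≤ D := (abs_nonneg _).trans h1
  have hlin : |α * p.2 + β * p.1 - (α * q.2 + β * q.1)| ≤ (|α| + |β|) * D := by
    calc |α * p.2 + β * p.1 - (α * q.2 + β * q.1)| = |α * (p.2 - q.2) + β * (p.1 - q.1)| := by
          ring_nf
      _ ≤ |α| * |p.2 - q.2| + |β| * |p.1 - q.1| := by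
          simpa only [abs_mul] using abs_add_le (α * (p.2 - q.2)) (β * (p.1 - q.1))
      _ ≤ (|α| + |β|) * D := by
          nlinarith [abs_nonneg α, abs_nonneg β]
  apply max_le <;> nlinarith [abs_nonneg α, abs_nonneg β]

def IsLinearODESolution (A B g h : ℝ → ℝ) (s : Set ℝ) : Prop :=
  ∀ r ∈ s, HasDerivAt g (h r) r ∧ HasDerivAt h (A r * h r + B r * g r) r

namespace IsLinearODESolution

variable {A B g h : ℝ → ℝ} {s : Set ℝ} {a b c : ℝ}

lemma mono {t : Set ℝ} (hs : IsLinearODESolution A B g h s) (hts : t ⊆ s) :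
    IsLinearODESolution A B g h t :=
  fun r hr => hs r (hts hr)

lemma neg (hs : IsLinearODESolution A B g h s) : IsLinearODESolution A B (-g) (-h) s :=
  fun r hr => ⟨(hs r hr).1.neg, (hs r hr).2.neg.congr_deriv (by simp only [Pi.neg_apply]; ring)⟩

lemma comp_neg (hs : IsLinearODESolution A B g h s) :
    IsLinearODESolution (fun t => -A (-t)) (fun t => B (-t)) (fun t => -g (-t)) (fun t => h (-t))
      (-s) := fun r hr =>
  ⟨((hs (-r) hr).1.comp r (hasDerivAt_neg r)).neg.congr_deriv (by simp),
    ((hs (-r) hr).2.comp r (hasDerivAt_neg r)).congr_deriv (by ring)⟩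

lemma continuousOn (hs : IsLinearODESolution A B g h s) : ContinuousOn g s :=
  fun r hr => (hs r hr).1.continuousAt.continuousWithinAt

lemma continuousOn_deriv (hs : IsLinearODESolution A B g h s) : ContinuousOn h s :=
  fun r hr => (hs r hr).2.continuousAt.continuousWithinAt

lemma strictMonoOn_Icc_of_pos (hs : IsLinearODESolution A B g h (Ico c b)) {x : ℝ}
    (hx : x ∈ Ico c b)
    (hpos : ∀ t ∈ Ioo c x, 0 < h t) : StrictMonoOn g (Icc c x) := by
  have hsub : Icc c x ⊆ Ico c b := Icc_subset_Ico_right hx.2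
  refine strictMonoOn_of_hasDerivWithinAt_pos (convex_Icc c x) (hs.continuousOn.mono hsub)
    (fun t ht => (hs t (hsub (interior_subset ht))).1.hasDerivWithinAt) ?_
  rwa [interior_Icc]

lemma pos_on_Ico_of_pos (hs : IsLinearODESolution A B g h (Ico c b))
    (hB : ∀ r ∈ Ico c b, 0 < B r) (hgc : 0 ≤ g c) (hhc : 0 < h c) :
    (∀ r ∈ Ico c b, 0 < h r) ∧ ∀ r ∈ Ioo c b, 0 < g r := by
  have hh : ∀ x ∈ Ico c b, 0 < h x := by
    intro x hx
    by_contra! hx0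
    obtain ⟨d, hd, hd0, hpos⟩ := exists_first_zero_of_continuousOn hx.1
      (hs.continuousOn_deriv.mono (Icc_subset_Ico_right hx.2)) hhc hx0
    have hdI : d ∈ Ico c b := ⟨hd.1.le, hd.2.trans_lt hx.2⟩
    have hgd : 0 < g d := hgc.trans_lt <| hs.strictMonoOn_Icc_of_pos hdI
      (fun t ht => hpos t ⟨ht.1.le, ht.2⟩) (left_mem_Icc.2 hd.1.le) (right_mem_Icc.2 hd.1.le)
      hd.1
    have hderiv := (hs d hdI).2.nonpos_of_forall_lt_of_mem_Ioo hd.1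
      (fun t ht => hd0 ▸ hpos t ⟨ht.1.le, ht.2⟩)
    rw [hd0, mul_zero, zero_add] at hderiv
    exact hderiv.not_gt (mul_pos (hB d hdI) hgd)
  refine ⟨hh, fun r hr => hgc.trans_lt ?_⟩
  exact hs.strictMonoOn_Icc_of_pos ⟨hr.1.le, hr.2⟩
    (fun t ht => hh t ⟨ht.1.le, ht.2.trans hr.2⟩)
    (left_mem_Icc.2 hr.1.le) (right_mem_Icc.2 hr.1.le) hr.1

lemma pos_on_Ioc_of_pos (hs : IsLinearODESolution A B g h (Ioc a c))
    (hB : ∀ r ∈ Ioc a c, 0 < B r) (hgc : g c ≤ 0) (hhc : 0 < h c) :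
    (∀ r ∈ Ioc a c, 0 < h r) ∧ ∀ r ∈ Ioo a c, g r < 0 := by
  have hs' := hs.comp_neg
  rw [neg_Ioc] at hs'
  obtain ⟨hh, hg⟩ := hs'.pos_on_Ico_of_pos (fun r hr => hB (-r) (neg_mem_Ioc_iff.2 hr))
    (by simpa using hgc) (by simpa using hhc)
  refine ⟨fun r hr => ?_, fun r hr => ?_⟩
  · simpa using hh (-r) (neg_mem_Ioc_iff.1 (by simpa using hr))
  · simpa using hg (-r) ⟨by linarith [hr.2], by linarith [hr.1]⟩

lemma sign_of_eq_zero_of_deriv_pos (hs : IsLinearODESolution A B g h (Ioo a b))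
    (hB : ∀ r ∈ Ioo a b, 0 < B r) (hc : c ∈ Ioo a b) (hgc : g c = 0) (hhc : 0 < h c) :
    (∀ r ∈ Ioo a b, 0 < h r) ∧ (∀ r ∈ Ioo a c, g r < 0) ∧
      ∀ r ∈ Ioo c b, 0 < g r := by
  have hIco : Ico c b ⊆ Ioo a b := Ico_subset_Ioo_left hc.1
  have hIoc : Ioc a c ⊆ Ioo a b := Ioc_subset_Ioo_right hc.2
  obtain ⟨hhR, hgR⟩ := (hs.mono hIco).pos_on_Ico_of_pos (fun r hr => hB r (hIco hr)) hgc.ge hhc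
  obtain ⟨hhL, hgL⟩ := (hs.mono hIoc).pos_on_Ioc_of_pos (fun r hr => hB r (hIoc hr)) hgc.le hhc
  refine ⟨fun r hr => ?_, hgL, hgR⟩
  rcases le_or_gt r c with hrc | hcr
  · exact hhL r ⟨hr.1, hrc⟩
  · exact hhR r ⟨hcr.le, hr.2⟩

lemma eqOn_zero_of_eq_zero (hs : IsLinearODESolution A B g h (Ioo a b))
    (hA : ContinuousOn A (Ioo a b)) (hB : ContinuousOn B (Ioo a b)) (hc : c ∈ Ioo a b)
    (hgc : g c = 0) (hhc : h c = 0) : EqOn g 0 (Ioo a b) := by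
  intro x hx
  obtain ⟨u, hau, hu⟩ := exists_between (lt_min hc.1 hx.1)
  obtain ⟨v, hv, hvb⟩ := exists_between (max_lt hc.2 hx.2)
  have hsub : Ioo u v ⊆ Ioo a b := Ioo_subset_Ioo hau.le hvb.le
  have hsub' : Icc u v ⊆ Ioo a b := Icc_subset_Ioo hau hvb
  obtain ⟨CA, hCA⟩ := isCompact_Icc.exists_bound_of_continuousOn (hA.mono hsub')
  obtain ⟨CB, hCB⟩ := isCompact_Icc.exists_bound_of_continuousOn (hB.mono hsub')
  have hLip : ∀ t ∈ Ioo u v, LipschitzOnWith (1 + CA + CB).toNNReal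
      (fun p : ℝ × ℝ => (p.2, A t * p.2 + B t * p.1)) univ := fun t ht => by
    have hAt := hCA t (Ioo_subset_Icc_self ht)
    have hBt := hCB t (Ioo_subset_Icc_self ht)
    rw [Real.norm_eq_abs] at hAt hBt
    refine (lipschitzWith_companion ?_).lipschitzOnWith
    exact (by linarith : 1 + |A t| + |B t| ≤ 1 + CA + CB).trans (Real.le_coe_toNNReal _)
  have hgh : ∀ t ∈ Ioo u v, HasDerivAt (fun t => (g t, h t)) (h t, A t * h t + B t * g t) t :=
    fun t ht => (hs t (hsub ht)).1.prodMk (hs t (hsub ht)).2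
  have hzero : ∀ t ∈ Ioo u v, HasDerivAt (0 : ℝ → ℝ × ℝ) (0, A t * 0 + B t * 0) t :=
    fun t _ => (hasDerivAt_const t (0 : ℝ × ℝ)).congr_deriv (by ext <;> simp)
  have heq := ODE_solution_unique_of_mem_Icc hLip (t₀ := c)
    ⟨hu.trans_le (min_le_left _ _), (le_max_left _ _).trans_lt hv⟩
    ((hs.continuousOn.prodMk hs.continuousOn_deriv).mono hsub') hgh (fun _ _ => mem_univ _)
    continuousOn_const hzero (fun _ _ => mem_univ _) (by simp [hgc, hhc])
    ⟨(min_le_right _ _).trans' hu.le, (le_max_right _ _).trans hv.le⟩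
  exact congrArg Prod.fst heq

end IsLinearODESolution

/-- Differentiating the equation gives `f''' = coeffA · f'' + coeffB · f'`. -/
noncomputable def coeffA (n : ℕ) (lam : ℝ) (f : ℝ → ℝ) (r : ℝ) : ℝ :=
  2 * deriv f r * ((r - ((n : ℝ) - 1) / r) * deriv f r - f r - lam * √(1 + deriv f r ^ 2))
    + (1 + deriv f r ^ 2) * (r - ((n : ℝ) - 1) / r) - lam * deriv f r * √(1 + deriv f r ^ 2)

noncomputable def coeffB (n : ℕ) (f : ℝ → ℝ) (r : ℝ) : ℝ :=
  ((n : ℝ) - 1) * (1 + deriv f r ^ 2) / r ^ 2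

section

variable {n : ℕ} {lam a b : ℝ} {f : ℝ → ℝ}

lemma continuousOn_coeffA (ha : 0 < a) (hf : ContinuousOn f (Ioo a b))
    (hf' : ContinuousOn (deriv f) (Ioo a b)) : ContinuousOn (coeffA n lam f) (Ioo a b) := by
  have hr : ∀ r ∈ Ioo a b, r ≠ 0 := fun r hr => (ha.trans hr.1).ne'
  unfold coeffA
  fun_prop (disch := assumption)

lemma continuousOn_coeffB (ha : 0 < a) (hf' : ContinuousOn (deriv f) (Ioo a b)) :
    ContinuousOn (coeffB n f) (Ioo a b) := by
  have hr : ∀ r ∈ Ioo a b, r ^ 2 ≠ 0 := fun r hr => pow_ne_zero 2 (ha.trans hr.1).ne'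
  unfold coeffB
  fun_prop (disch := assumption)

lemma coeffB_pos (hn : 1 < n) {r : ℝ} (hr : r ≠ 0) : 0 < coeffB n f r := by
  have hn' : (1 : ℝ) < n := by exact_mod_cast hn
  unfold coeffB
  positivity

lemma isLinearODESolution_deriv (ha : 0 < a)
    (hf : ∀ r ∈ Ioo a b, DifferentiableAt ℝ f r)
    (hf' : ∀ r ∈ Ioo a b, DifferentiableAt ℝ (deriv f) r)
    (hode : ∀ r ∈ Ioo a b,
      deriv (deriv f) r / (1 + (deriv f r) ^ 2) =
        (r - ((n : ℝ) - 1) / r) * deriv f r - f r - lam * Real.sqrt (1 + (deriv f r) ^ 2)) :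
    IsLinearODESolution (coeffA n lam f) (coeffB n f) (deriv f) (deriv (deriv f)) (Ioo a b) := by
  simp only [IsLinearODESolution, coeffA, coeffB]
  set g := deriv f
  have hg2 : ∀ r ∈ Ioo a b, deriv g r =
      (1 + g r ^ 2) * ((r - ((n : ℝ) - 1) / r) * g r - f r - lam * √(1 + g r ^ 2)) :=
    fun r hr => by rw [← hode r hr, mul_div_cancel₀ _ (by positivity)]
  intro r hr
  refine ⟨(hf' r hr).hasDerivAt, ?_⟩
  have hr0 : r ≠ 0 := (ha.trans hr.1).ne'
  have hgr := (hf' r hr).hasDerivAt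
  have hfr : HasDerivAt f (g r) r := (hf r hr).hasDerivAt
  have hpos : 0 < 1 + g r ^ 2 := by positivity
  have hsq := (hgr.fun_pow 2).const_add 1
  have hsqrt := hsq.sqrt hpos.ne'
  have hq : HasDerivAt (fun s => s - ((n : ℝ) - 1) / s) (1 + ((n : ℝ) - 1) / r ^ 2) r :=
    ((hasDerivAt_id r).sub ((hasDerivAt_const r ((n : ℝ) - 1)).div (hasDerivAt_id r) hr0))
      |>.congr_deriv (by simp; ring)
  have hprod := hsq.fun_mul (((hq.fun_mul hgr).fun_sub hfr).fun_sub (hsqrt.const_mul lam))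
  refine (hprod.congr_of_eventuallyEq
    (eventuallyEq_of_mem (isOpen_Ioo.mem_nhds hr) hg2)).congr_deriv ?_
  -- writing `1 + g r ^ 2 = s ^ 2` with `s = √(1 + g r ^ 2)` makes the identity polynomial in `s`
  rw [hg2 r hr, ← Real.sq_sqrt hpos.le]
  set s := √(1 + g r ^ 2)
  have hs0 : 0 < s := Real.sqrt_pos.2 hpos
  rw [Real.sqrt_sq hs0.le]
  field_simp
  ring

end

theorem stmt_7_general (n : ℕ) (hn : 2 ≤ n) (lam a b c : ℝ)
    (ha : 0 < a) (hc : c ∈ Set.Ioo a b)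
    (f : ℝ → ℝ)
    (hreg : ∀ r ∈ Set.Ioo a b, DifferentiableAt ℝ f r ∧ DifferentiableAt ℝ (deriv f) r ∧
      DifferentiableAt ℝ (deriv (deriv f)) r)
    (hode : ∀ r ∈ Set.Ioo a b,
      deriv (deriv f) r / (1 + (deriv f r) ^ 2) =
        (r - ((n : ℝ) - 1) / r) * deriv f r - f r - lam * Real.sqrt (1 + (deriv f r) ^ 2))
    (hnc : ¬ ∃ k : ℝ, ∀ r ∈ Set.Ioo a b, f r = k)
    (h1 : deriv f c = 0) :
    ((∀ r ∈ Set.Ioo a b, deriv (deriv f) r < 0) ∧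
      (∀ r ∈ Set.Ioo a c, 0 < deriv f r) ∧ (∀ r ∈ Set.Ioo c b, deriv f r < 0)) ∨
    ((∀ r ∈ Set.Ioo a b, 0 < deriv (deriv f) r) ∧
      (∀ r ∈ Set.Ioo a c, deriv f r < 0) ∧ (∀ r ∈ Set.Ioo c b, 0 < deriv f r)) := by
  have hf : ∀ r ∈ Ioo a b, DifferentiableAt ℝ f r := fun r hr => (hreg r hr).1
  have hsol := isLinearODESolution_deriv ha hf (fun r hr => (hreg r hr).2.1) hode
  have hB : ∀ r ∈ Ioo a b, 0 < coeffB n f r := fun r hr => coeffB_pos hn (ha.trans hr.1).ne'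
  rcases lt_trichotomy (deriv (deriv f) c) 0 with hneg | hzero | hpos
  · obtain ⟨hh, hL, hR⟩ := hsol.neg.sign_of_eq_zero_of_deriv_pos hB hc (by simp [h1])
      (by simpa using hneg)
    exact Or.inl ⟨fun r hr => by simpa using hh r hr, fun r hr => by simpa using hL r hr,
      fun r hr => by simpa using hR r hr⟩
  · have hg0 := hsol.eqOn_zero_of_eq_zero
      (continuousOn_coeffA ha (fun r hr => (hf r hr).continuousAt.continuousWithinAt)
        hsol.continuousOn)
      (continuousOn_coeffB ha hsol.continuousOn) hc h1 hzero
    exact absurd (isOpen_Ioo.exists_is_const_of_deriv_eq_zero isPreconnected_Ioo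
      (fun r hr => (hf r hr).differentiableWithinAt) hg0) hnc
  · exact Or.inr (hsol.sign_of_eq_zero_of_deriv_pos hB hc h1 hpos)

/-- For a non-constant C³ solution of
`f''/(1+(f')²) = (r − (n−1)/r)f' − f − λ√(1+(f')²)` on `(a,b) ⊂ (0,∞)` with `f'(c) = 0`:
either `f'' < 0` on `(a,b)`, with `f' > 0` on `(a,c)` and `f' < 0` on `(c,b)`, or
`f'' > 0` on `(a,b)`, with `f' < 0` on `(a,c)` and `f' > 0` on `(c,b)`. -/
theorem stmt_7 (n : ℕ) (hn : 2 ≤ n) (lam a b c : ℝ)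
    (ha : 0 < a) (hab : a < b) (hc : c ∈ Set.Ioo a b)
    (f : ℝ → ℝ)
    (hreg : ∀ r ∈ Set.Ioo a b, DifferentiableAt ℝ f r ∧ DifferentiableAt ℝ (deriv f) r ∧
      DifferentiableAt ℝ (deriv (deriv f)) r)
    (hode : ∀ r ∈ Set.Ioo a b,
      deriv (deriv f) r / (1 + (deriv f r) ^ 2) =
        (r - ((n : ℝ) - 1) / r) * deriv f r - f r - lam * Real.sqrt (1 + (deriv f r) ^ 2))
    (hnc : ¬ ∃ k : ℝ, ∀ r ∈ Set.Ioo a b, f r = k)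
    (h1 : deriv f c = 0) :
    ((∀ r ∈ Set.Ioo a b, deriv (deriv f) r < 0) ∧
      (∀ r ∈ Set.Ioo a c, 0 < deriv f r) ∧ (∀ r ∈ Set.Ioo c b, deriv f r < 0)) ∨
    ((∀ r ∈ Set.Ioo a b, 0 < deriv (deriv f) r) ∧
      (∀ r ∈ Set.Ioo a c, deriv f r < 0) ∧ (∀ r ∈ Set.Ioo c b, 0 < deriv f r)) :=
  stmt_7_general n hn lam a b c ha hc f hreg hode hnc h1
end

section
/- Let f : (a,b) → ℝ, with (a,b) ⊂ (0,∞), be a left maximally extended C² solution of f''/(1+(f')²) = (r − (n−1)/r)·f' − f − λ·√(1+(f')²) satisfying f'(r)·f''(r) > 0 for all r ∈ (a,b). Then a = 0 and lim_{r→0⁺} f'(r) = 0. -/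
/-!
Since `f' f'' > 0`, the derivative `f'` has constant sign, and `(f, λ) ↦ (-f, -λ)` is a symmetry
of the equation, so we may assume `f' > 0` and `f'' > 0`. Then `f'` decreases and stays positive as
`r ↓ a`, and `f` is monotone with bounded slope, so `(f, f')` has a finite limit at `a`. If
`a ≠ 0`, the equation written as a first-order system in `(r, f, f')` is `C¹` near this limit point;
the local solution through it agrees with `f` by Grönwall's inequality and continues `f` past `a`,
contradicting maximality. Hence `a = 0` and `f' → L ≥ 0`. If `L > 0`, the term `-(n-1) f'/r ≤ -L/r`
dominates the right-hand side as `r → 0⁺` and forces `f'' < 0`.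
-/

/-- `g` is a C² solution of `f''/(1+(f')²) = (r − (n−1)/r)f' − f − λ√(1+(f')²)` on `(a,b)`. -/
def IsProfileSol (n : ℕ) (lam a b : ℝ) (g : ℝ → ℝ) : Prop :=
  (∀ r ∈ Set.Ioo a b, DifferentiableAt ℝ g r ∧ DifferentiableAt ℝ (deriv g) r) ∧
  ∀ r ∈ Set.Ioo a b,
    deriv (deriv g) r / (1 + (deriv g r) ^ 2) =
      (r - ((n : ℝ) - 1) / r) * deriv g r - g r - lam * Real.sqrt (1 + (deriv g r) ^ 2)

open Set Filter Topology NNReal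

theorem HasDerivAt.fst {𝕜 E F : Type*} [NontriviallyNormedField 𝕜] [NormedAddCommGroup E]
    [NormedSpace 𝕜 E] [NormedAddCommGroup F] [NormedSpace 𝕜 F] {α : 𝕜 → E × F} {v : E × F}
    {t : 𝕜} (h : HasDerivAt α v t) : HasDerivAt (fun s => (α s).1) v.1 t :=
  hasFDerivAt_fst.comp_hasDerivAt (f := α) (l := Prod.fst) t h

theorem HasDerivAt.snd {𝕜 E F : Type*} [NontriviallyNormedField 𝕜] [NormedAddCommGroup E]
    [NormedSpace 𝕜 E] [NormedAddCommGroup F] [NormedSpace 𝕜 F] {α : 𝕜 → E × F} {v : E × F}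
    {t : 𝕜} (h : HasDerivAt α v t) : HasDerivAt (fun s => (α s).2) v.2 t :=
  hasFDerivAt_snd.comp_hasDerivAt (f := α) (l := Prod.snd) t h

theorem IsPreconnected.forall_pos_or_forall_neg {X : Type*} [TopologicalSpace X] {s : Set X}
    {g : X → ℝ} (hs : IsPreconnected s) (hg : ContinuousOn g s) (h₀ : ∀ x ∈ s, g x ≠ 0) :
    (∀ x ∈ s, 0 < g x) ∨ ∀ x ∈ s, g x < 0 := by
  by_contra! h
  obtain ⟨⟨x, hx, hgx⟩, y, hy, hgy⟩ := h
  obtain ⟨z, hz, hgz⟩ := hs.intermediate_value hx hy hg ⟨hgx, hgy⟩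
  exact h₀ z hz hgz

theorem ODE_solution_unique_of_tendsto_dist_nhdsGT {E : Type*} [NormedAddCommGroup E]
    [NormedSpace ℝ E] {v : E → E} {K : ℝ≥0} {U : Set E} (hv : LipschitzOnWith K v U)
    {F G : ℝ → E} {a u : ℝ}
    (hF : ∀ t ∈ Ioc a u, HasDerivAt F (v (F t)) t ∧ F t ∈ U)
    (hG : ∀ t ∈ Ioc a u, HasDerivAt G (v (G t)) t ∧ G t ∈ U)
    (hFG : Tendsto (fun t => dist (F t) (G t)) (𝓝[>] a) (𝓝 0)) :
    EqOn F G (Ioc a u) := by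
  intro c hc
  have hgronwall : ∀ s ∈ Ioo a c, dist (F c) (G c) ≤ dist (F s) (G s) * Real.exp (K * (c - s)) := by
    intro s hs
    have hsub : Icc s c ⊆ Ioc a u := fun t ht => ⟨hs.1.trans_le ht.1, ht.2.trans hc.2⟩
    exact dist_le_of_trajectories_ODE_of_mem (v := fun _ => v) (s := fun _ => U) (fun _ _ => hv)
      (fun t ht => (hF t (hsub ht)).1.continuousAt.continuousWithinAt)
      (fun t ht => (hF t (hsub (Ico_subset_Icc_self ht))).1.hasDerivWithinAt)
      (fun t ht => (hF t (hsub (Ico_subset_Icc_self ht))).2)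
      (fun t ht => (hG t (hsub ht)).1.continuousAt.continuousWithinAt)
      (fun t ht => (hG t (hsub (Ico_subset_Icc_self ht))).1.hasDerivWithinAt)
      (fun t ht => (hG t (hsub (Ico_subset_Icc_self ht))).2) le_rfl c ⟨hs.2.le, le_rfl⟩
  have hlim : Tendsto (fun s => dist (F s) (G s) * Real.exp (K * (c - s))) (𝓝[>] a) (𝓝 0) := by
    simpa using hFG.mul ((by fun_prop : Continuous fun s : ℝ => Real.exp (K * (c - s))).tendsto
      a |>.mono_left nhdsWithin_le_nhds)
  refine dist_le_zero.1 (ge_of_tendsto hlim ?_)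
  filter_upwards [Ioo_mem_nhdsGT hc.1] with s hs using hgronwall s hs

noncomputable def profileAccel (n : ℕ) (lam r y p : ℝ) : ℝ :=
  (1 + p ^ 2) * ((r - ((n : ℝ) - 1) / r) * p - y - lam * Real.sqrt (1 + p ^ 2))

/-- The profile equation as an autonomous first-order system in `(r, f, f')`. -/
noncomputable def profileField (n : ℕ) (lam : ℝ) (x : ℝ × ℝ × ℝ) : ℝ × ℝ × ℝ :=
  (1, x.2.2, profileAccel n lam x.1 x.2.1 x.2.2)

def IsProfileSolAt (n : ℕ) (lam : ℝ) (g : ℝ → ℝ) (r : ℝ) : Prop :=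
  DifferentiableAt ℝ g r ∧ DifferentiableAt ℝ (deriv g) r ∧
    deriv (deriv g) r = profileAccel n lam r (g r) (deriv g r)

def IsLeftMaximal (n : ℕ) (lam a b : ℝ) (f : ℝ → ℝ) : Prop :=
  ∀ a' < a, ¬ ∃ g : ℝ → ℝ, IsProfileSol n lam a' b g ∧ EqOn g f (Ioo a b)

variable {n : ℕ} {lam a b r : ℝ} {f g : ℝ → ℝ}

theorem isProfileSol_iff :
    IsProfileSol n lam a b g ↔ ∀ r ∈ Ioo a b, IsProfileSolAt n lam g r := by
  simp only [IsProfileSol, IsProfileSolAt, profileAccel]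
  refine ⟨fun h r hr => ⟨(h.1 r hr).1, (h.1 r hr).2, ?_⟩,
    fun h => ⟨fun r hr => ⟨(h r hr).1, (h r hr).2.1⟩, fun r hr => ?_⟩⟩
  · rw [← h.2 r hr, mul_div_cancel₀ _ (by positivity)]
  · rw [(h r hr).2.2, mul_div_cancel_left₀ _ (by positivity)]

theorem IsProfileSolAt.congr_of_eventuallyEq (h : IsProfileSolAt n lam g r)
    (hfg : f =ᶠ[𝓝 r] g) : IsProfileSolAt n lam f r :=
  ⟨hfg.differentiableAt_iff.2 h.1, hfg.deriv.differentiableAt_iff.2 h.2.1, by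
    rw [hfg.deriv.deriv_eq, h.2.2, hfg.eq_of_nhds, hfg.deriv.eq_of_nhds]⟩

theorem isProfileSolAt_of_hasDerivAt {y p : ℝ → ℝ}
    (h : ∀ᶠ t in 𝓝 r, HasDerivAt y (p t) t ∧ HasDerivAt p (profileAccel n lam t (y t) (p t)) t) :
    IsProfileSolAt n lam y r := by
  have hy : deriv y =ᶠ[𝓝 r] p := h.mono fun t ht => ht.1.deriv
  have hr := h.self_of_nhds
  exact ⟨hr.1.differentiableAt, hy.differentiableAt_iff.2 hr.2.differentiableAt, by
    rw [hy.deriv_eq, hr.2.deriv, hy.eq_of_nhds]⟩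

theorem IsProfileSolAt.hasDerivAt_phase (h : IsProfileSolAt n lam g r) :
    HasDerivAt (fun t => (t, g t, deriv g t)) (profileField n lam (r, g r, deriv g r)) r :=
  (hasDerivAt_id r).prodMk (h.1.hasDerivAt.prodMk (h.2.2 ▸ h.2.1.hasDerivAt))

theorem IsProfileSolAt.neg (h : IsProfileSolAt n lam g r) : IsProfileSolAt n (-lam) (-g) r := by
  refine ⟨h.1.neg, ?_, ?_⟩
  · rw [deriv.neg']
    exact h.2.1.neg
  · rw [deriv.neg', deriv.fun_neg, h.2.2, profileAccel, profileAccel]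
    simp only [Pi.neg_apply, neg_sq]
    ring

theorem contDiffAt_profileField {x : ℝ × ℝ × ℝ} (hx : x.1 ≠ 0) :
    ContDiffAt ℝ 1 (profileField n lam) x := by
  have hr : ContDiffAt ℝ 1 (fun x : ℝ × ℝ × ℝ => x.1) x := contDiff_fst.contDiffAt
  have hy : ContDiffAt ℝ 1 (fun x : ℝ × ℝ × ℝ => x.2.1) x :=
    (contDiff_fst.comp contDiff_snd).contDiffAt
  have hp : ContDiffAt ℝ 1 (fun x : ℝ × ℝ × ℝ => x.2.2) x :=
    (contDiff_snd.comp contDiff_snd).contDiffAt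
  have hw : ContDiffAt ℝ 1 (fun x : ℝ × ℝ × ℝ => 1 + x.2.2 ^ 2) x := contDiffAt_const.add (hp.pow 2)
  exact contDiffAt_const.prodMk (hp.prodMk (hw.mul ((((hr.sub (contDiffAt_const.div hr hx)).mul
    hp).sub hy).sub (contDiffAt_const.mul (hw.sqrt (by positivity))))))

theorem exists_phaseCurve {x₀ : ℝ × ℝ × ℝ} (hx₀ : x₀.1 ≠ 0) :
    ∃ α : ℝ → ℝ × ℝ × ℝ, α x₀.1 = x₀ ∧ ∃ ε > 0, ∀ t ∈ Ioo (x₀.1 - ε) (x₀.1 + ε),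
      HasDerivAt α (profileField n lam (α t)) t ∧ (α t).1 = t := by
  obtain ⟨α, hα₀, ε, hε, hα⟩ := (contDiffAt_profileField (n := n) (lam := lam)
    hx₀).exists_forall_mem_closedBall_exists_eq_forall_mem_Ioo_hasDerivAt₀ x₀.1
  have hfst : EqOn (fun t => (α t).1) id (Ioo (x₀.1 - ε) (x₀.1 + ε)) :=
    ODE_solution_unique_of_mem_Ioo (v := fun _ _ => (1 : ℝ)) (s := fun _ => univ) (K := 0)
      (fun _ _ => (LipschitzWith.const 1).lipschitzOnWith)
      (show x₀.1 ∈ Ioo (x₀.1 - ε) (x₀.1 + ε) from ⟨by linarith, by linarith⟩)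
      (fun t ht => ⟨(hα t ht).fst, mem_univ _⟩)
      (fun t _ => ⟨hasDerivAt_id t, mem_univ _⟩) (by simp [hα₀])
  exact ⟨α, hα₀, ε, hε, fun t ht => ⟨hα t ht, hfst ht⟩⟩

theorem isProfileSol_of_hasDerivAt_phaseCurve {α : ℝ → ℝ × ℝ × ℝ}
    (hα : ∀ t ∈ Ioo a b, HasDerivAt α (profileField n lam (α t)) t ∧ (α t).1 = t) :
    IsProfileSol n lam a b (fun t => (α t).2.1) := by
  refine isProfileSol_iff.2 fun r hr => isProfileSolAt_of_hasDerivAt (p := fun t => (α t).2.2) ?_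
  filter_upwards [Ioo_mem_nhds hr.1 hr.2] with t ht
  have hsnd := (hα t ht).1.snd
  refine ⟨hsnd.fst, ?_⟩
  simpa only [profileField, (hα t ht).2] using hsnd.snd

theorem profileAccel_neg {r y p L P M : ℝ} (hn : 2 ≤ n) (hr : 0 < r) (hL : 0 ≤ L) (hLp : L ≤ p)
    (hpP : p ≤ P) (hy : -y ≤ M) (hsmall : r * (r * P + M + |lam| * √(1 + P ^ 2)) < L) :
    profileAccel n lam r y p < 0 := by
  have hn' : (1 : ℝ) ≤ n - 1 := by
    have : (2 : ℝ) ≤ n := by exact_mod_cast hn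
    linarith
  have hsqrt : √(1 + p ^ 2) ≤ √(1 + P ^ 2) := Real.sqrt_le_sqrt (by nlinarith)
  have hlam : -(lam * √(1 + p ^ 2)) ≤ |lam| * √(1 + P ^ 2) := calc
    -(lam * √(1 + p ^ 2)) ≤ |lam| * √(1 + p ^ 2) := by
      rw [← neg_mul]; exact mul_le_mul_of_nonneg_right (neg_le_abs lam) (Real.sqrt_nonneg _)
    _ ≤ |lam| * √(1 + P ^ 2) := mul_le_mul_of_nonneg_left hsqrt (abs_nonneg lam)
  have hmul : r * ((r - ((n : ℝ) - 1) / r) * p - y - lam * √(1 + p ^ 2)) < 0 := by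
    have hexp : r * ((r - ((n : ℝ) - 1) / r) * p - y - lam * √(1 + p ^ 2)) =
        r * (r * p) - ((n : ℝ) - 1) * p + r * (-y) + r * -(lam * √(1 + p ^ 2)) := by
      field_simp
      ring
    rw [hexp]
    nlinarith [mul_le_mul_of_nonneg_left hpP hr.le, mul_le_mul_of_nonneg_left hy hr.le,
      mul_le_mul_of_nonneg_left hlam hr.le]
  exact mul_neg_of_pos_of_neg (by positivity) (neg_of_mul_neg_right hmul hr.le)

namespace IsProfileSol

theorem mono {a' b' : ℝ} (h : IsProfileSol n lam a b g) (hsub : Ioo a' b' ⊆ Ioo a b) :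
    IsProfileSol n lam a' b' g :=
  isProfileSol_iff.2 fun r hr => isProfileSol_iff.1 h r (hsub hr)

theorem continuousOn (h : IsProfileSol n lam a b g) : ContinuousOn g (Ioo a b) :=
  fun r hr => (h.1 r hr).1.continuousAt.continuousWithinAt

theorem continuousOn_deriv (h : IsProfileSol n lam a b g) : ContinuousOn (deriv g) (Ioo a b) :=
  fun r hr => (h.1 r hr).2.continuousAt.continuousWithinAt

theorem neg (h : IsProfileSol n lam a b g) : IsProfileSol n (-lam) a b (-g) :=
  isProfileSol_iff.2 fun r hr => (isProfileSol_iff.1 h r hr).neg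

theorem piecewise {a' c : ℝ} (hg : IsProfileSol n lam a' c g) (hf : IsProfileSol n lam a b f)
    (hac : a < c) (hgf : EqOn g f (Ioo a c)) :
    IsProfileSol n lam a' b (fun r => if r < c then g r else f r) ∧
      EqOn (fun r => if r < c then g r else f r) f (Ioo a b) := by
  have heq : EqOn (fun r => if r < c then g r else f r) f (Ioo a b) := fun r hr => by
    by_cases hrc : r < c
    · simp only [if_pos hrc, hgf ⟨hr.1, hrc⟩]
    · simp only [if_neg hrc]
  refine ⟨isProfileSol_iff.2 fun r hr => ?_, heq⟩
  by_cases hrc : r < c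
  · exact (isProfileSol_iff.1 hg r ⟨hr.1, hrc⟩).congr_of_eventuallyEq
      (eventuallyEq_of_mem (Iio_mem_nhds hrc) fun t ht => if_pos ht)
  · have hr' : r ∈ Ioo a b := ⟨hac.trans_le (not_lt.1 hrc), hr.2⟩
    exact (isProfileSol_iff.1 hf r hr').congr_of_eventuallyEq
      (eventuallyEq_of_mem (Ioo_mem_nhds hr'.1 hr'.2) heq)

theorem exists_extension (hsol : IsProfileSol n lam a b f) (ha : a ≠ 0) (hab : a < b)
    {y₀ p₀ : ℝ} (hy : Tendsto f (𝓝[>] a) (𝓝 y₀)) (hp : Tendsto (deriv f) (𝓝[>] a) (𝓝 p₀)) :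
    ∃ a' < a, ∃ g : ℝ → ℝ, IsProfileSol n lam a' b g ∧ EqOn g f (Ioo a b) := by
  obtain ⟨α, hα₀, ε, hε, hα⟩ := exists_phaseCurve (n := n) (lam := lam) (x₀ := (a, y₀, p₀)) ha
  dsimp only at hα₀ hα
  obtain ⟨K, U, hU, hlip⟩ :=
    (contDiffAt_profileField (n := n) (lam := lam) (x := (a, y₀, p₀)) ha).exists_lipschitzOnWith
  have hphase : Tendsto (fun t => (t, f t, deriv f t)) (𝓝[>] a) (𝓝 (a, y₀, p₀)) :=
    (tendsto_id.mono_right nhdsWithin_le_nhds).prodMk_nhds (hy.prodMk_nhds hp)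
  have hαa : Tendsto α (𝓝[>] a) (𝓝 (a, y₀, p₀)) :=
    hα₀ ▸ ((hα a ⟨by linarith, by linarith⟩).1.continuousAt.tendsto.mono_left nhdsWithin_le_nhds)
  have hnear : Ioo a (min b (a + ε)) ∈ 𝓝[>] a := Ioo_mem_nhdsGT (lt_min hab (by linarith))
  obtain ⟨u, hau, hu⟩ :=
    mem_nhdsGT_iff_exists_Ioc_subset.1 (inter_mem (hphase hU) (inter_mem (hαa hU) hnear))
  have hu' : ∀ t ∈ Ioc a u, t ∈ Ioo a b ∧ t ∈ Ioo (a - ε) (a + ε) := fun t ht =>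
    have h := (hu ht).2.2
    ⟨⟨h.1, h.2.trans_le (min_le_left _ _)⟩, ⟨by linarith [h.1], h.2.trans_le (min_le_right _ _)⟩⟩
  have hagree : EqOn (fun t => (t, f t, deriv f t)) α (Ioc a u) :=
    ODE_solution_unique_of_tendsto_dist_nhdsGT hlip
      (fun t ht => ⟨(isProfileSol_iff.1 hsol t (hu' t ht).1).hasDerivAt_phase, (hu ht).1⟩)
      (fun t ht => ⟨(hα t (hu' t ht).2).1, (hu ht).2.1⟩)
      (by simpa using hphase.dist hαa)
  have hsolα := (isProfileSol_of_hasDerivAt_phaseCurve hα).mono (a' := a - ε) (b' := u)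
    (Ioo_subset_Ioo_right (hu' u ⟨hau, le_rfl⟩).2.2.le)
  refine ⟨a - ε, by linarith, _, hsolα.piecewise hsol hau fun t ht => ?_⟩
  exact (congrArg (fun x => x.2.1) (hagree ⟨ht.1, ht.2.le⟩)).symm

theorem strictMonoOn (hsol : IsProfileSol n lam a b f) (hpos : ∀ r ∈ Ioo a b, 0 < deriv f r) :
    StrictMonoOn f (Ioo a b) :=
  strictMonoOn_of_deriv_pos (convex_Ioo a b) hsol.continuousOn (by rwa [interior_Ioo])

theorem strictMonoOn_deriv (hsol : IsProfileSol n lam a b f)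
    (hpos₂ : ∀ r ∈ Ioo a b, 0 < deriv (deriv f) r) :
    StrictMonoOn (deriv f) (Ioo a b) :=
  strictMonoOn_of_deriv_pos (convex_Ioo a b) hsol.continuousOn_deriv (by rwa [interior_Ioo])

theorem sub_le_deriv_mul_sub (hsol : IsProfileSol n lam a b f)
    (hpos₂ : ∀ r ∈ Ioo a b, 0 < deriv (deriv f) r) {r c : ℝ}
    (hr : a < r) (hrc : r ≤ c) (hc : c < b) : f c - f r ≤ deriv f c * (c - r) := by
  have hsub : Ioc a c ⊆ Ioo a b := Ioc_subset_Ioo_right hc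
  refine (convex_Ioc a c).image_sub_le_mul_sub_of_deriv_le (hsol.continuousOn.mono hsub)
    (fun x hx => (hsol.1 x (hsub (interior_subset hx))).1.differentiableWithinAt)
    (fun x hx => ?_) r ⟨hr, hrc⟩ c ⟨hr.trans_le hrc, le_rfl⟩ hrc
  rw [interior_Ioc] at hx
  exact (hsol.strictMonoOn_deriv hpos₂).monotoneOn (hsub (Ioo_subset_Ioc_self hx))
    (hsub ⟨hr.trans_le hrc, le_rfl⟩) hx.2.le

theorem exists_tendsto_deriv_nhdsGT (hsol : IsProfileSol n lam a b f) (hab : a < b)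
    (hpos : ∀ r ∈ Ioo a b, 0 < deriv f r) (hpos₂ : ∀ r ∈ Ioo a b, 0 < deriv (deriv f) r) :
    ∃ L, 0 ≤ L ∧ Tendsto (deriv f) (𝓝[>] a) (𝓝 L) ∧ ∀ r ∈ Ioo a b, L ≤ deriv f r := by
  have hbdd : BddBelow (deriv f '' Ioo a b) := ⟨0, forall_mem_image.2 fun r hr => (hpos r hr).le⟩
  exact ⟨_, le_csInf ((nonempty_Ioo.2 hab).image _) (forall_mem_image.2 fun r hr => (hpos r hr).le),
    (hsol.strictMonoOn_deriv hpos₂).monotoneOn.tendsto_nhdsWithin_Ioo_right (nonempty_Ioo.2 hab)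
      hbdd, fun r hr => csInf_le hbdd (mem_image_of_mem _ hr)⟩

theorem exists_tendsto_nhdsGT (hsol : IsProfileSol n lam a b f) (hab : a < b)
    (hpos : ∀ r ∈ Ioo a b, 0 < deriv f r) (hpos₂ : ∀ r ∈ Ioo a b, 0 < deriv (deriv f) r) :
    ∃ y₀, Tendsto f (𝓝[>] a) (𝓝 y₀) := by
  obtain ⟨c, hac, hcb⟩ := exists_between hab
  have hbdd : BddBelow (f '' Ioo a c) := by
    refine ⟨f c - deriv f c * (c - a), forall_mem_image.2 fun r hr => ?_⟩
    have h := hsol.sub_le_deriv_mul_sub hpos₂ hr.1 hr.2.le hcb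
    nlinarith [hpos c ⟨hac, hcb⟩, hr.1]
  exact ⟨_, ((hsol.strictMonoOn hpos).mono (Ioo_subset_Ioo_right hcb.le)).monotoneOn
    |>.tendsto_nhdsWithin_Ioo_right (nonempty_Ioo.2 hac) hbdd⟩

theorem tendsto_deriv_nhdsGT_zero (hn : 2 ≤ n) (hsol : IsProfileSol n lam 0 b f)
    (hb : 0 < b) (hpos : ∀ r ∈ Ioo 0 b, 0 < deriv f r)
    (hpos₂ : ∀ r ∈ Ioo 0 b, 0 < deriv (deriv f) r) :
    Tendsto (deriv f) (𝓝[>] 0) (𝓝 0) := by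
  obtain ⟨L, hL, hlim, hLle⟩ := hsol.exists_tendsto_deriv_nhdsGT hb hpos hpos₂
  obtain rfl | hLpos := hL.eq_or_lt
  · exact hlim
  exfalso
  obtain ⟨c, hc⟩ := nonempty_Ioo.2 hb
  set P := deriv f c
  set M := P * c - f c
  have hsmall : ∀ᶠ r in 𝓝[>] 0, r ∈ Ioo 0 c ∧ r * (r * P + M + |lam| * √(1 + P ^ 2)) < L := by
    have hcont : Tendsto (fun r : ℝ => r * (r * P + M + |lam| * √(1 + P ^ 2))) (𝓝 0) (𝓝 0) :=
      (by fun_prop : Continuous fun r : ℝ => r * (r * P + M + |lam| * √(1 + P ^ 2))).tendsto' 0 0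
        (zero_mul _)
    filter_upwards [Ioo_mem_nhdsGT hc.1, nhdsWithin_le_nhds (hcont.eventually (gt_mem_nhds hLpos))]
      with r hr hrL using ⟨hr, hrL⟩
  obtain ⟨r, ⟨hr₀, hrc⟩, hrL⟩ := hsmall.exists
  have hr : r ∈ Ioo 0 b := ⟨hr₀, hrc.trans hc.2⟩
  have hfr : -f r ≤ M := by
    have := hsol.sub_le_deriv_mul_sub hpos₂ hr₀ hrc.le hc.2
    nlinarith [hpos c hc]
  have hneg := profileAccel_neg hn hr₀ hL (hLle r hr)
    ((hsol.strictMonoOn_deriv hpos₂).monotoneOn hr hc hrc.le) hfr hrL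
  rw [← (isProfileSol_iff.1 hsol r hr).2.2] at hneg
  exact (hpos₂ r hr).not_gt hneg

theorem eq_zero_and_tendsto_of_pos (hn : 2 ≤ n) (hsol : IsProfileSol n lam a b f)
    (hab : a < b) (hmax : IsLeftMaximal n lam a b f) (hpos : ∀ r ∈ Ioo a b, 0 < deriv f r)
    (hpos₂ : ∀ r ∈ Ioo a b, 0 < deriv (deriv f) r) :
    a = 0 ∧ Tendsto (deriv f) (𝓝[>] 0) (𝓝 0) := by
  obtain rfl : a = 0 := by
    by_contra ha
    obtain ⟨y₀, hy⟩ := hsol.exists_tendsto_nhdsGT hab hpos hpos₂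
    obtain ⟨p₀, -, hp, -⟩ := hsol.exists_tendsto_deriv_nhdsGT hab hpos hpos₂
    obtain ⟨a', ha', g, hg, hgf⟩ := hsol.exists_extension ha hab hy hp
    exact hmax a' ha' ⟨g, hg, hgf⟩
  exact ⟨rfl, hsol.tendsto_deriv_nhdsGT_zero hn hab hpos hpos₂⟩

end IsProfileSol

theorem IsLeftMaximal.neg (h : IsLeftMaximal n lam a b f) : IsLeftMaximal n (-lam) a b (-f) :=
  fun a' ha' ⟨g, hg, hgf⟩ => h a' ha' ⟨-g, by simpa using hg.neg, fun r hr => by simp [hgf hr]⟩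

theorem stmt_8_general (n : ℕ) (hn : 2 ≤ n) (lam a b : ℝ)
    (hab : a < b)
    (f : ℝ → ℝ)
    (hsol : IsProfileSol n lam a b f)
    (hmax : ∀ a' : ℝ, a' < a →
      ¬ ∃ g : ℝ → ℝ, IsProfileSol n lam a' b g ∧ Set.EqOn g f (Set.Ioo a b))
    (hsign : ∀ r ∈ Set.Ioo a b, 0 < deriv f r * deriv (deriv f) r) :
    a = 0 ∧ Filter.Tendsto (deriv f) (nhdsWithin 0 (Set.Ioi 0)) (nhds 0) := by
  have hf' : ∀ r ∈ Ioo a b, deriv f r ≠ 0 := fun r hr h => by simpa [h] using hsign r hr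
  rcases isPreconnected_Ioo.forall_pos_or_forall_neg hsol.continuousOn_deriv hf' with hpos | hneg
  · exact hsol.eq_zero_and_tendsto_of_pos hn hab hmax hpos fun r hr =>
      pos_of_mul_pos_right (hsign r hr) (hpos r hr).le
  · obtain ⟨ha, hlim⟩ := hsol.neg.eq_zero_and_tendsto_of_pos hn hab (IsLeftMaximal.neg hmax)
      (fun r hr => by simpa using hneg r hr)
      (fun r hr => by simpa using neg_of_mul_pos_right (hsign r hr) (hneg r hr).le)
    exact ⟨ha, by simpa using hlim.neg⟩

/-- A left maximally extended C² solution on `(a,b) ⊂ (0,∞)` with `f'·f'' > 0` throughout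
satisfies `a = 0` and `f'(r) → 0` as `r → 0⁺`. -/
theorem stmt_8 (n : ℕ) (hn : 2 ≤ n) (lam a b : ℝ)
    (ha : 0 ≤ a) (hab : a < b)
    (f : ℝ → ℝ)
    (hsol : IsProfileSol n lam a b f)
    (hmax : ∀ a' : ℝ, a' < a →
      ¬ ∃ g : ℝ → ℝ, IsProfileSol n lam a' b g ∧ Set.EqOn g f (Set.Ioo a b))
    (hsign : ∀ r ∈ Set.Ioo a b, 0 < deriv f r * deriv (deriv f) r) :
    a = 0 ∧ Filter.Tendsto (deriv f) (nhdsWithin 0 (Set.Ioi 0)) (nhds 0) :=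
  stmt_8_general n hn lam a b hab f hsol hmax hsign
end

section
/- Let λ < 0, n ≥ 2, x₀ > −λ, u₀ > 0, σ > 0 with u₀ = σ·x₀ + λ·√(1+σ²), and let u solve u'' = [x·u' − u + (n−1)/u + λ·√(1+(u')²)]·(1+(u')²) on its maximal interval [x₀, x_∞) with u(x₀) = u₀ and u'(x₀) ≥ σ. Then, defining Ψ(x) := x·u'(x) + λ·√(1+(u'(x))²) − u(x), one has Ψ ≥ 0, Ψ' > 0, u' > 0 and u'' > 0 on [x₀, x_∞). -/
/-!
Along a solution, the ODE reads `u'' = (Ψ + (n - 1)/u)(1 + u'²)` and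
`Ψ' = u'' · (x + λ u'/√(1 + u'²))`, where the second factor is positive because
`x > -λ`, `λ < 0` and `u'/√(1 + u'²) < 1`. Hence wherever `Ψ` vanishes, `u'' > 0` and so `Ψ' > 0`:
`Ψ` can never cross zero downwards. Since `t ↦ t x₀ + λ √(1 + t²)` is increasing and takes
the value `u₀` at `σ`, `Ψ(x₀) ≥ 0`, and this propagates to all of `[x₀, x_∞)`.
Then `u'' > 0` everywhere, `u'` increases from `u'(x₀) ≥ σ > 0`, and `Ψ' > 0`.
-/

open Real Set

lemma lt_sqrt_one_add_sq (t : ℝ) : t < √(1 + t ^ 2) := by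
  calc t ≤ |t| := le_abs_self t
    _ = √(t ^ 2) := (sqrt_sq_eq_abs t).symm
    _ < √(1 + t ^ 2) := sqrt_lt_sqrt (sq_nonneg t) (by linarith)

lemma div_sqrt_one_add_sq_lt_one (t : ℝ) : t / √(1 + t ^ 2) < 1 :=
  (div_lt_one (sqrt_pos.2 (by positivity))).2 (lt_sqrt_one_add_sq t)

lemma hasDerivAt_sqrt_one_add_sq (t : ℝ) :
    HasDerivAt (fun s => √(1 + s ^ 2)) (t / √(1 + t ^ 2)) t := by
  convert ((hasDerivAt_pow 2 t).const_add 1).sqrt (by positivity) using 1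
  field_simp
  ring

lemma add_mul_div_sqrt_one_add_sq_pos {lam x : ℝ} (hlam : lam < 0) (hx : -lam < x) (t : ℝ) :
    0 < x + lam * (t / √(1 + t ^ 2)) := by
  nlinarith [div_sqrt_one_add_sq_lt_one t]

lemma strictMono_mul_add_mul_sqrt_one_add_sq {lam x : ℝ} (hlam : lam < 0) (hx : -lam < x) :
    StrictMono fun t => t * x + lam * √(1 + t ^ 2) :=
  strictMono_of_hasDerivAt_pos
    (fun t => ((hasDerivAt_mul_const x).add ((hasDerivAt_sqrt_one_add_sq t).const_mul lam)))
    (fun t => by simpa using add_mul_div_sqrt_one_add_sq_pos hlam hx t)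

lemma nonneg_of_hasDerivAt_pos_of_eq_zero {f f' : ℝ → ℝ} {a b : ℝ}
    (hf : ∀ x ∈ Ico a b, HasDerivAt f (f' x) x) (ha : 0 ≤ f a)
    (hzero : ∀ x ∈ Ico a b, f x = 0 → 0 < f' x) : ∀ x ∈ Ico a b, 0 ≤ f x := by
  intro x hx
  have hsub : Icc a x ⊆ Ico a b := Icc_subset_Ico_right hx.2
  refine image_le_of_deriv_right_lt_deriv_boundary' (f := fun _ => (0 : ℝ)) (f' := 0)
    continuousOn_const (fun y _ => hasDerivWithinAt_const y _ 0) ha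
    (fun y hy => (hf y (hsub hy)).continuousAt.continuousWithinAt)
    (fun y hy => (hf y (hsub (Ico_subset_Icc_self hy))).hasDerivWithinAt)
    (fun y hy h => hzero y (hsub (Ico_subset_Icc_self hy)) h.symm) (right_mem_Icc.2 hx.1)

noncomputable def psi (lam : ℝ) (u : ℝ → ℝ) (x : ℝ) : ℝ :=
  x * deriv u x + lam * √(1 + deriv u x ^ 2) - u x

lemma hasDerivAt_psi (lam : ℝ) {u : ℝ → ℝ} {x : ℝ} (hu : DifferentiableAt ℝ u x)
    (hu' : DifferentiableAt ℝ (deriv u) x) :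
    HasDerivAt (psi lam u)
      (deriv (deriv u) x * (x + lam * (deriv u x / √(1 + deriv u x ^ 2)))) x := by
  have hsqrt := (hasDerivAt_sqrt_one_add_sq (deriv u x)).comp x hu'.hasDerivAt
  have h : HasDerivAt (psi lam u) (1 * deriv u x + x * deriv (deriv u) x
      + lam * (deriv u x / √(1 + deriv u x ^ 2) * deriv (deriv u) x) - deriv u x) x :=
    (((hasDerivAt_id x).mul hu'.hasDerivAt).add (hsqrt.const_mul lam)).sub hu.hasDerivAt
  convert h using 1
  ring

lemma deriv_deriv_pos_of_psi_nonneg {lam c x : ℝ} {u : ℝ → ℝ} (hc : 0 < c) (hu : 0 < u x)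
    (hode : deriv (deriv u) x =
      (x * deriv u x - u x + c / u x + lam * √(1 + deriv u x ^ 2)) * (1 + deriv u x ^ 2))
    (hpsi : 0 ≤ psi lam u x) : 0 < deriv (deriv u) x := by
  have hode_psi : deriv (deriv u) x = (psi lam u x + c / u x) * (1 + deriv u x ^ 2) := by
    rw [hode, psi]
    ring
  rw [hode_psi]
  exact mul_pos (add_pos_of_nonneg_of_pos hpsi (div_pos hc hu)) (by positivity)

theorem stmt_11_general (n : ℕ) (hn : 2 ≤ n) (lam x₀ xI u₀ σ : ℝ)
    (hlam : lam < 0) (hx₀ : -lam < x₀) (hσ : 0 < σ)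
    (hrel : u₀ = σ * x₀ + lam * Real.sqrt (1 + σ ^ 2))
    (u : ℝ → ℝ)
    (hreg : ∀ x ∈ Set.Ico x₀ xI, DifferentiableAt ℝ u x ∧ DifferentiableAt ℝ (deriv u) x)
    (hupos : ∀ x ∈ Set.Ico x₀ xI, 0 < u x)
    (hode : ∀ x ∈ Set.Ico x₀ xI,
      deriv (deriv u) x =
        (x * deriv u x - u x + ((n : ℝ) - 1) / u x
            + lam * Real.sqrt (1 + (deriv u x) ^ 2)) * (1 + (deriv u x) ^ 2))
    (hinit : u x₀ = u₀) (hinit' : σ ≤ deriv u x₀) :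
    ∀ x ∈ Set.Ico x₀ xI,
      0 ≤ x * deriv u x + lam * Real.sqrt (1 + (deriv u x) ^ 2) - u x ∧
      0 < deriv (fun t => t * deriv u t + lam * Real.sqrt (1 + (deriv u t) ^ 2) - u t) x ∧
      0 < deriv u x ∧ 0 < deriv (deriv u) x := by
  have hfactor : ∀ x ∈ Ico x₀ xI, 0 < x + lam * (deriv u x / √(1 + deriv u x ^ 2)) :=
    fun x hx => add_mul_div_sqrt_one_add_sq_pos hlam (hx₀.trans_le hx.1) _
  have hpsi' := fun x hx => hasDerivAt_psi lam (hreg x hx).1 (hreg x hx).2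
  have hn' : (0 : ℝ) < n - 1 := sub_pos.2 (by exact_mod_cast hn)
  have hu''_pos_of_psi : ∀ x ∈ Ico x₀ xI, 0 ≤ psi lam u x → 0 < deriv (deriv u) x :=
    fun x hx => deriv_deriv_pos_of_psi_nonneg hn' (hupos x hx) (hode x hx)
  have hpsi₀ : 0 ≤ psi lam u x₀ := by
    have := (strictMono_mul_add_mul_sqrt_one_add_sq hlam hx₀).monotone hinit'
    simp only [psi, hinit, hrel] at this ⊢
    linarith
  have hpsi : ∀ x ∈ Ico x₀ xI, 0 ≤ psi lam u x :=
    nonneg_of_hasDerivAt_pos_of_eq_zero hpsi' hpsi₀ fun x hx h =>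
      mul_pos (hu''_pos_of_psi x hx h.ge) (hfactor x hx)
  have hu''_pos : ∀ x ∈ Ico x₀ xI, 0 < deriv (deriv u) x :=
    fun x hx => hu''_pos_of_psi x hx (hpsi x hx)
  have hu'_mono : StrictMonoOn (deriv u) (Ico x₀ xI) :=
    strictMonoOn_of_deriv_pos (convex_Ico x₀ xI)
      (fun x hx => (hreg x hx).2.continuousAt.continuousWithinAt)
      (fun x hx => hu''_pos x (Ioo_subset_Ico_self (by rwa [interior_Ico] at hx)))
  intro x hx
  refine ⟨hpsi x hx, ?_, ?_, hu''_pos x hx⟩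
  · rw [show (fun t => t * deriv u t + lam * √(1 + deriv u t ^ 2) - u t) = psi lam u from rfl,
      (hpsi' x hx).deriv]
    exact mul_pos (hu''_pos x hx) (hfactor x hx)
  · have hx₀_mem : x₀ ∈ Ico x₀ xI := left_mem_Ico.2 (hx.1.trans_lt hx.2)
    exact hσ.trans_le (hinit'.trans (hu'_mono.monotoneOn hx₀_mem hx hx.1))

/-- For the IVP `u'' = [x·u' − u + (n−1)/u + λ√(1+(u')²)]·(1+(u')²)`, `u(x₀) = u₀`,
`u'(x₀) ≥ σ`, with `λ < 0`, `x₀ > −λ`, `u₀ > 0`, `σ > 0`, `u₀ = σx₀ + λ√(1+σ²)`, the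
quantity `Ψ(x) = x·u'(x) + λ√(1+(u'(x))²) − u(x)` satisfies `Ψ ≥ 0`, `Ψ' > 0`, and
`u' > 0`, `u'' > 0` on `[x₀, x_∞)`. -/
theorem stmt_11 (n : ℕ) (hn : 2 ≤ n) (lam x₀ xI u₀ σ : ℝ)
    (hlam : lam < 0) (hx₀ : -lam < x₀) (hu₀ : 0 < u₀) (hσ : 0 < σ)
    (hrel : u₀ = σ * x₀ + lam * Real.sqrt (1 + σ ^ 2))
    (hxI : x₀ < xI)
    (u : ℝ → ℝ)
    (hreg : ∀ x ∈ Set.Ico x₀ xI, DifferentiableAt ℝ u x ∧ DifferentiableAt ℝ (deriv u) x)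
    (hupos : ∀ x ∈ Set.Ico x₀ xI, 0 < u x)
    (hode : ∀ x ∈ Set.Ico x₀ xI,
      deriv (deriv u) x =
        (x * deriv u x - u x + ((n : ℝ) - 1) / u x
            + lam * Real.sqrt (1 + (deriv u x) ^ 2)) * (1 + (deriv u x) ^ 2))
    (hinit : u x₀ = u₀) (hinit' : σ ≤ deriv u x₀) :
    ∀ x ∈ Set.Ico x₀ xI,
      0 ≤ x * deriv u x + lam * Real.sqrt (1 + (deriv u x) ^ 2) - u x ∧
      0 < deriv (fun t => t * deriv u t + lam * Real.sqrt (1 + (deriv u t) ^ 2) - u t) x ∧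
      0 < deriv u x ∧ 0 < deriv (deriv u) x :=
  stmt_11_general n hn lam x₀ xI u₀ σ hlam hx₀ hσ hrel u hreg hupos hode hinit hinit'
end

section
/- Let λ < 0, n ≥ 2, x₀ > −λ, u₀ ≥ √(n−1), σ > 0 with u₀ = σ·x₀ + λ·√(1+σ²), and let u solve u'' = [x·u' − u + (n−1)/u + λ·√(1+(u')²)]·(1+(u')²) on its maximal interval [x₀, x_∞) with u(x₀) = u₀, u'(x₀) ≥ σ. Then x_∞ < −λ + (n/(n−1))·(x₀ + λ); in particular x_∞ < ∞. -/
/-!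
With `P = u'` the equation reads `P' = Φ · (1 + P²)`, where
`Φ = x P + λ√(1 + P²) − u + (n − 1)/u`. As long as `Φ > 0`, both `P` and `u` increase from their
initial values, and then `Φ' ≥ (x + λ) P' − (n − 1) P / u² > 0`. Since
`Φ(x₀) > c := (n − 1)/(σ (x₀ + λ))`, a first-crossing argument keeps `Φ > c` on the whole
interval. Hence `P' > c (1 + P²)`, so `arctan P − c x` increases, and `arctan P < π/2` bounds the
length of the interval by `(π/2 − arctan σ)/c = arctan (1/σ)/c < 1/(σ c) = (x₀ + λ)/(n − 1)`.
-/

/-- `v` is a C² solution of `u'' = [x·u' − u + (n−1)/u + λ√(1+(u')²)]·(1+(u')²)` on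
`[x₀, b)`, positive there. -/
def IsGraphSol (n : ℕ) (lam x₀ b : ℝ) (v : ℝ → ℝ) : Prop :=
  (∀ x ∈ Set.Ico x₀ b, DifferentiableAt ℝ v x ∧ DifferentiableAt ℝ (deriv v) x) ∧
  (∀ x ∈ Set.Ico x₀ b, 0 < v x) ∧
  ∀ x ∈ Set.Ico x₀ b,
    deriv (deriv v) x =
      (x * deriv v x - v x + ((n : ℝ) - 1) / v x
          + lam * Real.sqrt (1 + (deriv v x) ^ 2)) * (1 + (deriv v x) ^ 2)

open Real Set

lemma sqrt_one_add_sq_sub_sqrt_one_add_sq_le {s t : ℝ} (h : t ≤ s) :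
    √(1 + s ^ 2) - √(1 + t ^ 2) ≤ s - t := by
  have hs := sq_sqrt (show 0 ≤ 1 + s ^ 2 by positivity)
  have ht := sq_sqrt (show 0 ≤ 1 + t ^ 2 by positivity)
  have hs' : s < √(1 + s ^ 2) := lt_sqrt_of_sq_lt (by linarith)
  have ht' : t < √(1 + t ^ 2) := lt_sqrt_of_sq_lt (by linarith)
  nlinarith [sqrt_nonneg (1 + s ^ 2), sqrt_nonneg (1 + t ^ 2)]

lemma monotoneOn_Icc_of_hasDerivAt_nonneg {f f' : ℝ → ℝ} {a b : ℝ}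
    (hf : ∀ x ∈ Icc a b, HasDerivAt f (f' x) x) (hf' : ∀ x ∈ Ioo a b, 0 ≤ f' x) :
    MonotoneOn f (Icc a b) :=
  monotoneOn_of_hasDerivWithinAt_nonneg (convex_Icc a b)
    (fun x hx => (hf x hx).continuousAt.continuousWithinAt)
    (fun x hx => (hf x (interior_subset hx)).hasDerivWithinAt)
    (fun x hx => hf' x (by rwa [interior_Icc] at hx))

lemma forall_lt_of_deriv_nonneg_while_lt {f f' : ℝ → ℝ} {a b c : ℝ}
    (hf : ∀ x ∈ Ico a b, HasDerivAt f (f' x) x) (ha : c < f a)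
    (hf' : ∀ x ∈ Ioo a b, (∀ s ∈ Icc a x, c < f s) → 0 ≤ f' x) :
    ∀ x ∈ Ico a b, c < f x := by
  intro y hy
  by_contra! hyc
  set S := Icc a y ∩ f ⁻¹' Iic c
  have hS : IsClosed S :=
    ContinuousOn.preimage_isClosed_of_isClosed
      (fun x hx => (hf x ⟨hx.1, hx.2.trans_lt hy.2⟩).continuousAt.continuousWithinAt)
      isClosed_Icc isClosed_Iic
  have hbdd : BddBelow S := ⟨a, fun x hx => hx.1.1⟩
  obtain ⟨⟨hra, hry⟩, hrc⟩ := hS.csInf_mem ⟨y, ⟨hy.1, le_rfl⟩, hyc⟩ hbdd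
  set r := sInf S
  have hrb : r < b := hry.trans_lt hy.2
  have hbefore : ∀ s ∈ Ico a r, c < f s := fun s hs => by
    by_contra! h
    exact (csInf_le hbdd ⟨⟨hs.1, hs.2.le.trans hry⟩, h⟩).not_gt hs.2
  have hmono : MonotoneOn f (Icc a r) :=
    monotoneOn_Icc_of_hasDerivAt_nonneg (fun x hx => hf x ⟨hx.1, hx.2.trans_lt hrb⟩)
      fun x hx => hf' x ⟨hx.1, hx.2.trans hrb⟩ fun s hs => hbefore s ⟨hs.1, hs.2.trans_lt hx.2⟩
  exact (ha.trans_le (hmono ⟨le_rfl, hra⟩ ⟨hra, le_rfl⟩ hra)).not_ge hrc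

/-- `arctan g − c x` is nondecreasing and `arctan g < π/2`. -/
lemma le_add_of_mul_one_add_sq_le_deriv {g g' : ℝ → ℝ} {a b c : ℝ} (hc : 0 < c)
    (hg : ∀ x ∈ Ico a b, HasDerivAt g (g' x) x)
    (hg' : ∀ x ∈ Ico a b, c * (1 + g x ^ 2) ≤ g' x) :
    b ≤ a + (π / 2 - arctan (g a)) / c := by
  by_contra! hb
  set y := a + (π / 2 - arctan (g a)) / c
  have hay : a ≤ y :=
    le_add_of_nonneg_right (div_nonneg (sub_nonneg.2 (arctan_lt_pi_div_two _).le) hc.le)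
  have hmono : MonotoneOn (fun x => arctan (g x) - c * x) (Icc a y) := by
    refine monotoneOn_Icc_of_hasDerivAt_nonneg
      (fun x hx => (hg x ⟨hx.1, hx.2.trans_lt hb⟩).arctan.sub ((hasDerivAt_id x).const_mul c))
      fun x hx => ?_
    have hx' : x ∈ Ico a b := ⟨hx.1.le, hx.2.trans hb⟩
    have h1 : 0 < 1 + g x ^ 2 := by positivity
    rw [sub_nonneg, mul_one, one_div_mul_eq_div, le_div_iff₀ h1]
    exact hg' x hx'
  have hay' := hmono ⟨le_rfl, hay⟩ ⟨hay, le_rfl⟩ hay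
  have hcy : c * y = c * a + (π / 2 - arctan (g a)) := by
    simp only [y, mul_add, mul_div_cancel₀ _ hc.ne']
  simp only at hay'
  linarith [arctan_lt_pi_div_two (g y)]

lemma pi_div_two_sub_arctan_lt_inv {x : ℝ} (hx : 0 < x) : π / 2 - arctan x < x⁻¹ :=
  calc π / 2 - arctan x = arctan x⁻¹ := (arctan_inv_of_pos hx).symm
    _ < tan (arctan x⁻¹) := lt_tan (arctan_pos.2 (inv_pos.2 hx)) (arctan_lt_pi_div_two _)
    _ = x⁻¹ := tan_arctan _

/-- The quantity `Φ` of the paper. -/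
noncomputable def graphPhi (n : ℕ) (lam : ℝ) (u : ℝ → ℝ) (x : ℝ) : ℝ :=
  x * deriv u x + lam * √(1 + deriv u x ^ 2) - u x + ((n : ℝ) - 1) / u x

lemma div_lt_graphPhi_of_initial {n : ℕ} {lam x₀ σ : ℝ} {u : ℝ → ℝ} (hn : 1 < n)
    (hlam : lam < 0) (ha : 0 < x₀ + lam) (hσu : σ ≤ deriv u x₀) (hu₀ : 0 < u x₀)
    (hrel : u x₀ = σ * x₀ + lam * √(1 + σ ^ 2)) :
    ((n : ℝ) - 1) / (σ * (x₀ + lam)) < graphPhi n lam u x₀ := by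
  have hk : (0 : ℝ) < n - 1 := sub_pos.2 (Nat.one_lt_cast.2 hn)
  have hσ' : σ < √(1 + σ ^ 2) := lt_sqrt_of_sq_lt (by linarith)
  have hu₀lt : u x₀ < σ * (x₀ + lam) := by nlinarith
  have hsqrt := sqrt_one_add_sq_sub_sqrt_one_add_sq_le hσu
  have hlin : u x₀ ≤ x₀ * deriv u x₀ + lam * √(1 + deriv u x₀ ^ 2) := by
    nlinarith [mul_nonneg ha.le (sub_nonneg.2 hσu)]
  have hdiv : ((n : ℝ) - 1) / (σ * (x₀ + lam)) < ((n : ℝ) - 1) / u x₀ :=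
    div_lt_div_of_pos_left hk hu₀ hu₀lt
  rw [graphPhi]
  linarith

lemma graphPhi_deriv_formula_pos {k lam σ a x p v φ : ℝ} (hk : 0 < k) (hlam : lam ≤ 0) (hσ : 0 < σ)
    (hp : σ ≤ p) (hv : 1 ≤ v) (ha : 0 < a) (hax : a ≤ x + lam) (hφ : k / (σ * a) ≤ φ) :
    0 < x * (φ * (1 + p ^ 2)) + lam * (p * (φ * (1 + p ^ 2)) / √(1 + p ^ 2))
      - k * p / v ^ 2 := by
  set Q := φ * (1 + p ^ 2)
  have hφ' : k ≤ σ * a * φ := (div_le_iff₀' (by positivity)).1 hφ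
  have hQ : 0 ≤ Q := mul_nonneg ((div_pos hk (by positivity)).le.trans hφ) (by positivity)
  have hsqrt : 0 < √(1 + p ^ 2) := sqrt_pos.2 (by positivity)
  have hpQ : p * Q / √(1 + p ^ 2) ≤ Q := by
    rw [div_le_iff₀ hsqrt]
    exact mul_le_mul_of_nonneg_right (lt_sqrt_of_sq_lt (by linarith)).le hQ |>.trans_eq
      (mul_comm _ _)
  have hlamQ : lam * Q ≤ lam * (p * Q / √(1 + p ^ 2)) := mul_le_mul_of_nonpos_left hpQ hlam
  have hv' : k * p / v ^ 2 ≤ k * p := div_le_self (by nlinarith) (by nlinarith)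
  have hmain : σ * (k * p) < σ * ((x + lam) * Q) :=
    calc σ * (k * p) = k * (σ * p) := by ring
      _ < k * (1 + p ^ 2) := mul_lt_mul_of_pos_left (by nlinarith) hk
      _ ≤ σ * a * φ * (1 + p ^ 2) := mul_le_mul_of_nonneg_right hφ' (by positivity)
      _ = σ * (a * Q) := by ring
      _ ≤ σ * ((x + lam) * Q) :=
        mul_le_mul_of_nonneg_left (mul_le_mul_of_nonneg_right hax hQ) hσ.le
  nlinarith

namespace IsGraphSol

variable {n : ℕ} {lam x₀ b : ℝ} {u : ℝ → ℝ}

lemma deriv_deriv_eq (h : IsGraphSol n lam x₀ b u) {x : ℝ} (hx : x ∈ Ico x₀ b) :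
    deriv (deriv u) x = graphPhi n lam u x * (1 + deriv u x ^ 2) := by
  rw [h.2.2 x hx, graphPhi]
  ring

lemma hasDerivAt_graphPhi (h : IsGraphSol n lam x₀ b u) {x : ℝ} (hx : x ∈ Ico x₀ b) :
    HasDerivAt (graphPhi n lam u)
      (x * deriv (deriv u) x + lam * (deriv u x * deriv (deriv u) x / √(1 + deriv u x ^ 2))
        - ((n : ℝ) - 1) * deriv u x / u x ^ 2) x := by
  have hu := (h.1 x hx).1.hasDerivAt
  have hu' := (h.1 x hx).2.hasDerivAt
  have hsqrt := ((hu'.fun_pow 2).const_add 1).sqrt (by positivity)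
  have hΦ := ((((hasDerivAt_id x).mul hu').add (hsqrt.const_mul lam)).sub hu).add
    ((hasDerivAt_const x ((n : ℝ) - 1)).div hu (h.2.1 x hx).ne')
  refine hΦ.congr_deriv ?_
  have : 0 < √(1 + deriv u x ^ 2) := sqrt_pos.2 (by positivity)
  simp only [id_eq]
  field_simp
  ring

lemma monotoneOn_deriv (h : IsGraphSol n lam x₀ b u) {r : ℝ} (hr : r < b)
    (hΦ : ∀ s ∈ Icc x₀ r, 0 < graphPhi n lam u s) : MonotoneOn (deriv u) (Icc x₀ r) := by
  refine monotoneOn_Icc_of_hasDerivAt_nonneg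
    (fun s hs => (h.1 s ⟨hs.1, hs.2.trans_lt hr⟩).2.hasDerivAt) fun s hs => ?_
  rw [h.deriv_deriv_eq ⟨hs.1.le, hs.2.trans hr⟩]
  have := hΦ s (Ioo_subset_Icc_self hs)
  positivity

lemma monotoneOn (h : IsGraphSol n lam x₀ b u) {r : ℝ} (hr : r < b)
    (hu' : ∀ s ∈ Icc x₀ r, 0 ≤ deriv u s) : MonotoneOn u (Icc x₀ r) :=
  monotoneOn_Icc_of_hasDerivAt_nonneg
    (fun s hs => (h.1 s ⟨hs.1, hs.2.trans_lt hr⟩).1.hasDerivAt)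
    fun s hs => hu' s (Ioo_subset_Icc_self hs)

lemma div_lt_graphPhi (h : IsGraphSol n lam x₀ b u) (hn : 1 < n) (hlam : lam < 0)
    {σ : ℝ} (hσ : 0 < σ) (ha : 0 < x₀ + lam) (hσu : σ ≤ deriv u x₀) (hu₀ : 1 ≤ u x₀)
    (hΦ₀ : ((n : ℝ) - 1) / (σ * (x₀ + lam)) < graphPhi n lam u x₀) :
    ∀ x ∈ Ico x₀ b, ((n : ℝ) - 1) / (σ * (x₀ + lam)) < graphPhi n lam u x := by
  have hk : (0 : ℝ) < n - 1 := sub_pos.2 (Nat.one_lt_cast.2 hn)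
  have hc : 0 < ((n : ℝ) - 1) / (σ * (x₀ + lam)) := by positivity
  refine forall_lt_of_deriv_nonneg_while_lt (fun x hx => h.hasDerivAt_graphPhi hx) hΦ₀
    fun x hx hΦ => ?_
  have hx₀x : x₀ ∈ Icc x₀ x := left_mem_Icc.2 hx.1.le
  have hxx : x ∈ Icc x₀ x := right_mem_Icc.2 hx.1.le
  have hP := h.monotoneOn_deriv hx.2 fun s hs => hc.trans (hΦ s hs)
  have hσP : ∀ s ∈ Icc x₀ x, σ ≤ deriv u s := fun s hs => hσu.trans (hP hx₀x hs hs.1)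
  have hu := h.monotoneOn hx.2 fun s hs => hσ.le.trans (hσP s hs)
  rw [h.deriv_deriv_eq ⟨hx.1.le, hx.2⟩]
  exact (graphPhi_deriv_formula_pos hk hlam.le hσ (hσP x hxx) (hu₀.trans (hu hx₀x hxx hx.1.le))
    ha (by linarith [hx.1]) (hΦ x hxx).le).le

end IsGraphSol

theorem stmt_12_general (n : ℕ) (hn : 2 ≤ n) (lam x₀ xI u₀ σ : ℝ)
    (hlam : lam < 0) (hx₀ : -lam < x₀) (hu₀ : Real.sqrt ((n : ℝ) - 1) ≤ u₀) (hσ : 0 < σ)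
    (hrel : u₀ = σ * x₀ + lam * Real.sqrt (1 + σ ^ 2))
    (u : ℝ → ℝ)
    (hsol : IsGraphSol n lam x₀ xI u)
    (hinit : u x₀ = u₀) (hinit' : σ ≤ deriv u x₀) :
    xI < -lam + ((n : ℝ) / ((n : ℝ) - 1)) * (x₀ + lam) := by
  have hk : (1 : ℝ) ≤ n - 1 := by
    have : (2 : ℝ) ≤ n := by exact_mod_cast hn
    linarith
  have ha : 0 < x₀ + lam := by linarith
  have hu₀1 : 1 ≤ u x₀ := hinit ▸ (one_le_sqrt.2 hk).trans hu₀
  set c := ((n : ℝ) - 1) / (σ * (x₀ + lam)) with hc_def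
  have hc : 0 < c := by positivity
  have hΦ := hsol.div_lt_graphPhi hn hlam hσ ha hinit' hu₀1
    (div_lt_graphPhi_of_initial hn hlam ha hinit' (by linarith) (hinit.trans hrel))
  have hlen : xI ≤ x₀ + (π / 2 - arctan (deriv u x₀)) / c :=
    le_add_of_mul_one_add_sq_le_deriv hc (fun x hx => (hsol.1 x hx).2.hasDerivAt) fun x hx => by
      rw [hsol.deriv_deriv_eq hx]
      exact mul_le_mul_of_nonneg_right (hΦ x hx).le (by positivity)
  have harctan : π / 2 - arctan (deriv u x₀) < σ⁻¹ :=
    (sub_le_sub_left (arctan_strictMono.monotone hinit') _).trans_lt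
      (pi_div_two_sub_arctan_lt_inv hσ)
  calc xI ≤ x₀ + (π / 2 - arctan (deriv u x₀)) / c := hlen
    _ < x₀ + σ⁻¹ / c := by gcongr
    _ = -lam + ((n : ℝ) / ((n : ℝ) - 1)) * (x₀ + lam) := by
      rw [hc_def]
      field_simp
      ring

/-- Under the initial conditions of Lemma 3.1 with `u₀ ≥ √(n−1)`, the maximal interval of
existence `[x₀, x_∞)` satisfies `x_∞ < −λ + (n/(n−1))·(x₀ + λ)`. -/
theorem stmt_12 (n : ℕ) (hn : 2 ≤ n) (lam x₀ xI u₀ σ : ℝ)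
    (hlam : lam < 0) (hx₀ : -lam < x₀) (hu₀ : Real.sqrt ((n : ℝ) - 1) ≤ u₀) (hσ : 0 < σ)
    (hrel : u₀ = σ * x₀ + lam * Real.sqrt (1 + σ ^ 2))
    (hxI : x₀ < xI)
    (u : ℝ → ℝ)
    (hsol : IsGraphSol n lam x₀ xI u)
    (hmax : ∀ b' : ℝ, xI < b' →
      ¬ ∃ v : ℝ → ℝ, IsGraphSol n lam x₀ b' v ∧ Set.EqOn v u (Set.Ico x₀ xI))
    (hinit : u x₀ = u₀) (hinit' : σ ≤ deriv u x₀) :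
    xI < -lam + ((n : ℝ) / ((n : ℝ) - 1)) * (x₀ + lam) :=
  stmt_12_general n hn lam x₀ xI u₀ σ hlam hx₀ hu₀ hσ hrel u hsol hinit hinit'
end

section
/- Let λ < 0, n ≥ 2, and suppose φ : (a, c₁] → (0,∞) is C² with φ' < 0 on (a,c₁] and satisfies φ'' ≥ −(1/M)·φ'·φ² on (a, c₁) for some constant M > 0, where (a,c₁) is bounded. Then for all r ∈ (a, c₁), φ(r) ≤ (φ(c₁)·√(c₁−a) + √(3M))/√(r−a). -/
open Set Filter Topology

/-!
Since `φ'' + φ² φ' / M ≥ 0`, the quantity `φ' + φ³/(3M)` increases, so on `(a, r]` we get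
`φ' ≤ (φ(c₁)³ - φ³)/(3M) ≤ -(φ - φ(c₁))³/(3M)`. Hence `ψ := φ - φ(c₁) > 0` satisfies
`(ψ⁻²)' ≥ 2/(3M)`, and integrating from `a` to `r` gives `(r - a) ψ(r)² ≤ 3M/2`.
-/

theorem monotoneOn_add_pow_three_div_of_le_deriv {D : Set ℝ} (hD : Convex ℝ D)
    {f f' f'' : ℝ → ℝ} {M : ℝ}
    (hf : ∀ x ∈ D, HasDerivAt f (f' x) x) (hf' : ∀ x ∈ D, HasDerivAt f' (f'' x) x)
    (hle : ∀ x ∈ interior D, -(1 / M) * f' x * f x ^ 2 ≤ f'' x) :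
    MonotoneOn (fun x => f' x + f x ^ 3 / (3 * M)) D := by
  have hderiv : ∀ x ∈ D,
      HasDerivAt (fun x => f' x + f x ^ 3 / (3 * M)) (f'' x + f x ^ 2 * f' x / M) x := by
    intro x hx
    refine ((hf' x hx).add (((hf x hx).pow 3).div_const (3 * M))).congr_deriv ?_
    push_cast
    ring
  refine monotoneOn_of_deriv_nonneg hD
    (fun x hx => (hderiv x hx).continuousAt.continuousWithinAt)
    (fun x hx => (hderiv x (interior_subset hx)).differentiableAt.differentiableWithinAt)
    fun x hx => ?_
  rw [(hderiv x (interior_subset hx)).deriv]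
  have hrw : -(1 / M) * f' x * f x ^ 2 = -(f x ^ 2 * f' x / M) := by ring
  linarith [hle x hx]

theorem monotoneOn_inv_sq_sub_of_deriv_le {ψ ψ' : ℝ → ℝ} {a b K : ℝ} (hK : 0 < K)
    (hψ : ∀ x ∈ Ioc a b, HasDerivAt ψ (ψ' x) x) (hpos : ∀ x ∈ Ioc a b, 0 < ψ x)
    (hle : ∀ x ∈ Ioo a b, ψ' x ≤ -ψ x ^ 3 / K) :
    MonotoneOn (fun x => (ψ x ^ 2)⁻¹ - 2 * x / K) (Ioc a b) := by
  have hderiv : ∀ x ∈ Ioc a b, HasDerivAt (fun x => (ψ x ^ 2)⁻¹ - 2 * x / K)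
      (-(2 * ψ x * ψ' x) / (ψ x ^ 2) ^ 2 - 2 / K) x := by
    intro x hx
    refine ((((hψ x hx).pow 2).inv (pow_ne_zero 2 (hpos x hx).ne')).sub
      (((hasDerivAt_id x).const_mul 2).div_const K)).congr_deriv ?_
    simp
  refine monotoneOn_of_deriv_nonneg (convex_Ioc a b)
    (fun x hx => (hderiv x hx).continuousAt.continuousWithinAt)
    (fun x hx => ?_) fun x hx => ?_
  · rw [interior_Ioc] at hx
    exact (hderiv x (Ioo_subset_Ioc_self hx)).differentiableAt.differentiableWithinAt
  · rw [interior_Ioc] at hx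
    have hx' := Ioo_subset_Ioc_self hx
    have hψx := hpos x hx'
    have hψ'x := hle x hx
    rw [le_div_iff₀ hK] at hψ'x
    rw [(hderiv x hx').deriv, sub_nonneg, div_le_div_iff₀ hK (by positivity)]
    nlinarith [mul_le_mul_of_nonneg_left hψ'x (by positivity : 0 ≤ 2 * ψ x)]

theorem sq_mul_sub_le_of_deriv_le {ψ ψ' : ℝ → ℝ} {a b K : ℝ} (hK : 0 < K) (hab : a < b)
    (hψ : ∀ x ∈ Ioc a b, HasDerivAt ψ (ψ' x) x) (hpos : ∀ x ∈ Ioc a b, 0 < ψ x)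
    (hle : ∀ x ∈ Ioo a b, ψ' x ≤ -ψ x ^ 3 / K) :
    ψ b ^ 2 * (b - a) ≤ K / 2 := by
  have hmono := monotoneOn_inv_sq_sub_of_deriv_le hK hψ hpos hle
  have hbound : ∀ x ∈ Ioc a b, 2 * (b - x) / K ≤ (ψ b ^ 2)⁻¹ := by
    intro x hx
    have hx_le := hmono hx (right_mem_Ioc.2 hab) hx.2
    have := inv_pos.2 (pow_pos (hpos x hx) 2)
    simp only at hx_le
    rw [mul_sub, sub_div]
    linarith
  have hlim : Tendsto (fun x => 2 * (b - x) / K) (𝓝[>] a) (𝓝 (2 * (b - a) / K)) :=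
    ((by fun_prop : Continuous fun x : ℝ => 2 * (b - x) / K).tendsto a).mono_left
      nhdsWithin_le_nhds
  have hba : 2 * (b - a) / K ≤ (ψ b ^ 2)⁻¹ :=
    le_of_tendsto hlim (mem_of_superset (Ioc_mem_nhdsGT hab) hbound)
  rw [div_le_iff₀ hK, ← div_eq_inv_mul, le_div_iff₀ (pow_pos (hpos b (right_mem_Ioc.2 hab)) 2)]
    at hba
  linarith

theorem sub_pow_three_le_pow_three_sub {x y : ℝ} (hy : 0 ≤ y) (hyx : y ≤ x) :
    (x - y) ^ 3 ≤ x ^ 3 - y ^ 3 := by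
  nlinarith [mul_nonneg (mul_nonneg hy (hy.trans hyx)) (sub_nonneg.2 hyx)]

theorem le_neg_sub_pow_three_div_of_monotoneOn {f f' : ℝ → ℝ} {D : Set ℝ} {M x c : ℝ}
    (hM : 0 < M) (hmono : MonotoneOn (fun x => f' x + f x ^ 3 / (3 * M)) D) (hx : x ∈ D)
    (hc : c ∈ D) (hxc : x ≤ c) (hf'c : f' c ≤ 0) (hfc : 0 ≤ f c) (hfcx : f c ≤ f x) :
    f' x ≤ -(f x - f c) ^ 3 / (3 * M) := by
  have hw := hmono hx hc hxc
  have hcube := div_le_div_of_nonneg_right (sub_pow_three_le_pow_three_sub hfc hfcx)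
    (by positivity : 0 ≤ 3 * M)
  simp only at hw
  rw [neg_div]
  rw [sub_div] at hcube
  linarith

theorem le_div_sqrt_of_sub_sq_mul_le {P Q r c a K : ℝ} (hQ : 0 ≤ Q) (hQP : Q ≤ P)
    (har : a < r) (hrc : r ≤ c) (h : (P - Q) ^ 2 * (r - a) ≤ K) :
    P ≤ (Q * √(c - a) + √K) / √(r - a) := by
  rw [le_div_iff₀ (Real.sqrt_pos.2 (sub_pos.2 har))]
  have hPQ : (P - Q) * √(r - a) ≤ √K := by
    rw [← Real.sqrt_sq (sub_nonneg.2 hQP), ← Real.sqrt_mul (sq_nonneg _)]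
    exact Real.sqrt_le_sqrt h
  have hQc : Q * √(r - a) ≤ Q * √(c - a) :=
    mul_le_mul_of_nonneg_left (Real.sqrt_le_sqrt (by linarith)) hQ
  nlinarith

theorem stmt_13_general (a c₁ M : ℝ)
    (hM : 0 < M) (φ : ℝ → ℝ)
    (hreg : ∀ r ∈ Set.Ioc a c₁, DifferentiableAt ℝ φ r ∧ DifferentiableAt ℝ (deriv φ) r)
    (hpos : ∀ r ∈ Set.Ioc a c₁, 0 < φ r)
    (hφ' : ∀ r ∈ Set.Ioc a c₁, deriv φ r < 0)
    (hφ'' : ∀ r ∈ Set.Ioo a c₁, -(1 / M) * deriv φ r * (φ r) ^ 2 ≤ deriv (deriv φ) r) :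
    ∀ r ∈ Set.Ioo a c₁,
      φ r ≤ (φ c₁ * Real.sqrt (c₁ - a) + Real.sqrt (3 * M)) / Real.sqrt (r - a) := by
  intro r ⟨har, hrc⟩
  have hc₁ : c₁ ∈ Ioc a c₁ := right_mem_Ioc.2 (har.trans hrc)
  have hsub : Ioc a r ⊆ Ioc a c₁ := Ioc_subset_Ioc_right hrc.le
  have hφ : ∀ x ∈ Ioc a c₁, HasDerivAt φ (deriv φ x) x := fun x hx => (hreg x hx).1.hasDerivAt
  have hanti : StrictAntiOn φ (Ioc a c₁) :=
    strictAntiOn_of_hasDerivWithinAt_neg (convex_Ioc a c₁)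
      (fun x hx => (hφ x hx).continuousAt.continuousWithinAt)
      (fun x hx => (hφ x (interior_subset hx)).hasDerivWithinAt)
      fun x hx => hφ' x (interior_subset hx)
  have hmono := monotoneOn_add_pow_three_div_of_le_deriv (convex_Ioc a c₁) hφ
    (fun x hx => (hreg x hx).2.hasDerivAt) (by rwa [interior_Ioc])
  have hgap : ∀ x ∈ Ioc a r, φ c₁ < φ x := fun x hx => hanti (hsub hx) hc₁ (hx.2.trans_lt hrc)
  have hbarrier := sq_mul_sub_le_of_deriv_le (ψ := fun x => φ x - φ c₁) (by positivity) har
    (fun x hx => (hφ x (hsub hx)).sub_const (φ c₁)) (fun x hx => sub_pos.2 (hgap x hx))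
    fun x hx => le_neg_sub_pow_three_div_of_monotoneOn hM hmono
      (hsub (Ioo_subset_Ioc_self hx)) hc₁ (hx.2.le.trans hrc.le) (hφ' c₁ hc₁).le
      (hpos c₁ hc₁).le (hgap x (Ioo_subset_Ioc_self hx)).le
  exact le_div_sqrt_of_sub_sq_mul_le (hpos c₁ hc₁).le (hgap r (right_mem_Ioc.2 har)).le har
    hrc.le (by linarith)

/-- Barrier estimate: if `φ > 0`, `φ' < 0` on `(a,c₁]` and
`φ'' ≥ −(1/M)·φ'·φ²` on `(a,c₁)`, then
`φ(r) ≤ (φ(c₁)√(c₁−a) + √(3M))/√(r−a)` for `r ∈ (a,c₁)`. -/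
theorem stmt_13 (n : ℕ) (hn : 2 ≤ n) (lam : ℝ) (hlam : lam < 0) (a c₁ M : ℝ)
    (hac : a < c₁) (hM : 0 < M) (φ : ℝ → ℝ)
    (hreg : ∀ r ∈ Set.Ioc a c₁, DifferentiableAt ℝ φ r ∧ DifferentiableAt ℝ (deriv φ) r)
    (hpos : ∀ r ∈ Set.Ioc a c₁, 0 < φ r)
    (hφ' : ∀ r ∈ Set.Ioc a c₁, deriv φ r < 0)
    (hφ'' : ∀ r ∈ Set.Ioo a c₁, -(1 / M) * deriv φ r * (φ r) ^ 2 ≤ deriv (deriv φ) r) :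
    ∀ r ∈ Set.Ioo a c₁,
      φ r ≤ (φ c₁ * Real.sqrt (c₁ - a) + Real.sqrt (3 * M)) / Real.sqrt (r - a) :=
  stmt_13_general a c₁ M hM φ hreg hpos hφ' hφ''
end

section
/- Let λ < 0, n ≥ 2, and b ≥ √(n−1) + √2. Let f : [b−√2, b] → ℝ be a C³ solution of f''/(1+(f')²) = (r − (n−1)/r)·f' − f + λ·√(1+(f')²) with f(b) > 0. Then there exists c ∈ [b−√2, b) with f'(c) ≥ 0; equivalently, it is impossible that f' < 0 throughout [b−√2, b). -/
/-!
Suppose `f' < 0` on `[a, b)`, `a = b - √2`. Then `f` decreases, so `f > 0` there. Since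
`r - (n-1)/r ≥ 0` for `r ≥ √(n-1)`, every term on the right of the ODE except `-f` is negative,
whence `f'' < -f < 0`. Differentiating the ODE, each term of `f'''` is then negative as well, so
`f''` decreases and `f'' ≤ f''(a) < -f(a)`. Integrating twice,
`f(b) ≤ f(a) (1 - (b - a)²/2) = 0`.
-/

open Set

lemma strictAntiOn_Icc_of_hasDerivAt_neg {g g' : ℝ → ℝ} {a b : ℝ}
    (hg : ∀ x ∈ Icc a b, HasDerivAt g (g' x) x) (hg' : ∀ x ∈ Ioo a b, g' x < 0) :
    StrictAntiOn g (Icc a b) :=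
  strictAntiOn_of_hasDerivWithinAt_neg (convex_Icc a b)
    (fun x hx => (hg x hx).continuousAt.continuousWithinAt)
    (fun x hx => (hg x (interior_subset hx)).hasDerivWithinAt) (by rwa [interior_Icc])

lemma antitoneOn_Icc_of_hasDerivAt_nonpos {g g' : ℝ → ℝ} {a b : ℝ}
    (hg : ∀ x ∈ Icc a b, HasDerivAt g (g' x) x) (hg' : ∀ x ∈ Ioo a b, g' x ≤ 0) :
    AntitoneOn g (Icc a b) :=
  antitoneOn_of_hasDerivWithinAt_nonpos (convex_Icc a b)
    (fun x hx => (hg x hx).continuousAt.continuousWithinAt)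
    (fun x hx => (hg x (interior_subset hx)).hasDerivWithinAt) (by rwa [interior_Icc])

lemma le_of_deriv_deriv_le {f : ℝ → ℝ} {a b K : ℝ} (hab : a ≤ b)
    (hf : ∀ r ∈ Icc a b, DifferentiableAt ℝ f r)
    (hf' : ∀ r ∈ Icc a b, DifferentiableAt ℝ (deriv f) r)
    (hf'' : ∀ r ∈ Ioo a b, deriv (deriv f) r ≤ -K) :
    f b ≤ f a + deriv f a * (b - a) - K * (b - a) ^ 2 / 2 := by
  have hmem : a ∈ Icc a b := left_mem_Icc.2 hab
  have hslope : ∀ r ∈ Icc a b, deriv f r ≤ deriv f a - K * (r - a) := by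
    have hanti : AntitoneOn (fun r => deriv f r + K * (r - a)) (Icc a b) := by
      refine antitoneOn_Icc_of_hasDerivAt_nonpos (g' := fun r => deriv (deriv f) r + K)
        (fun r hr => ?_) (fun r hr => by linarith [hf'' r hr])
      exact ((hf' r hr).hasDerivAt.add (((hasDerivAt_id r).sub_const a).const_mul K)).congr_deriv
        (by simp)
    intro r hr
    have hr_le := hanti hmem hr hr.1
    simp only [sub_self, mul_zero, add_zero] at hr_le
    linarith
  have hanti : AntitoneOn (fun r => f r - deriv f a * (r - a) + K * (r - a) ^ 2 / 2) (Icc a b) := by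
    refine antitoneOn_Icc_of_hasDerivAt_nonpos
      (g' := fun r => deriv f r - deriv f a + K * (r - a)) (fun r hr => ?_)
      (fun r hr => by linarith [hslope r (Ioo_subset_Icc_self hr)])
    exact (((hf r hr).hasDerivAt.sub (((hasDerivAt_id r).sub_const a).const_mul (deriv f a))).add
      ((((hasDerivAt_id r).sub_const a).pow 2).const_mul K |>.div_const 2)).congr_deriv
      (by simp only [id_eq]; push_cast; ring)
  have hb_le := hanti hmem (right_mem_Icc.2 hab) hab
  norm_num at hb_le
  linarith

lemma sub_div_nonneg_of_le_sq {c r : ℝ} (hr : 0 < r) (hc : c ≤ r ^ 2) : 0 ≤ r - c / r := by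
  rw [sub_nonneg, div_le_iff₀ hr]; nlinarith

/-- The ODE reads `f'' / (1 + f'²) = odeRHS (n - 1) lam r (f r) (f' r)`. -/
noncomputable def odeRHS (c lam r y p : ℝ) : ℝ :=
  (r - c / r) * p - y + lam * √(1 + p ^ 2)

lemma odeRHS_le {c lam r y p : ℝ} (hA : 0 ≤ r - c / r) (hp : p ≤ 0) (hlam : lam < 0) :
    odeRHS c lam r y p ≤ lam - y := by
  have h1 : 1 ≤ √(1 + p ^ 2) := Real.one_le_sqrt.2 (by nlinarith)
  unfold odeRHS
  nlinarith [mul_nonneg hA (neg_nonneg.2 hp)]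

lemma HasDerivAt.odeRHS {c lam r : ℝ} {f u : ℝ → ℝ} {v : ℝ} (hr : r ≠ 0)
    (hf : HasDerivAt f (u r) r) (hu : HasDerivAt u v r) :
    HasDerivAt (fun s => odeRHS c lam s (f s) (u s))
      (c / r ^ 2 * u r + (r - c / r) * v + lam * (u r * v / √(1 + u r ^ 2))) r := by
  have hS : 0 < 1 + u r ^ 2 := by positivity
  have hA : HasDerivAt (fun s => s - c / s) (1 + c / r ^ 2) r :=
    ((hasDerivAt_id r).sub ((hasDerivAt_inv hr).const_mul c)).congr_deriv
      (by field_simp; ring)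
  exact (((hA.mul hu).sub hf).add
    ((((hasDerivAt_const r (1 : ℝ)).add (hu.pow 2)).sqrt hS.ne').const_mul lam)).congr_deriv
    (by simp only [Pi.add_apply, Pi.pow_apply]; field_simp; ring)

namespace NegativeSlope

open Filter Topology

variable {c lam a b : ℝ} {f : ℝ → ℝ}

lemma coeff_nonneg (ha : 0 < a) (hca : c ≤ a ^ 2) {r : ℝ} (hr : a ≤ r) : 0 ≤ r - c / r :=
  sub_div_nonneg_of_le_sq (ha.trans_le hr) (hca.trans (pow_le_pow_left₀ ha.le hr 2))

variable (ha : 0 < a) (hca : c ≤ a ^ 2) (hlam : lam < 0)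
  (hode : ∀ r ∈ Icc a b,
    deriv (deriv f) r = odeRHS c lam r (f r) (deriv f r) * (1 + deriv f r ^ 2))
  (hpos : ∀ r ∈ Ico a b, 0 < f r) (hneg : ∀ r ∈ Ico a b, deriv f r < 0)
include ha hca hlam hode hpos hneg

lemma deriv_deriv_lt_neg {r : ℝ} (hr : r ∈ Ico a b) : deriv (deriv f) r < -f r := by
  have hF := odeRHS_le (y := f r) (coeff_nonneg ha hca hr.1) (hneg r hr).le hlam
  have hF0 : odeRHS c lam r (f r) (deriv f r) < 0 := by linarith [hpos r hr]
  rw [hode r (Ico_subset_Icc_self hr)]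
  nlinarith [mul_nonneg (neg_nonneg.2 hF0.le) (sq_nonneg (deriv f r))]

lemma deriv_deriv_deriv_neg (hc : 0 ≤ c) (hreg : ∀ r ∈ Icc a b,
      DifferentiableAt ℝ f r ∧ DifferentiableAt ℝ (deriv f) r) {r : ℝ} (hr : r ∈ Ioo a b) :
    deriv (deriv (deriv f)) r < 0 := by
  have hrI : r ∈ Icc a b := Ioo_subset_Icc_self hr
  have hrO : r ∈ Ico a b := Ioo_subset_Ico_self hr
  have hr0 : 0 < r := ha.trans hr.1
  obtain ⟨hf, hf'⟩ := hreg r hrI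
  set u := deriv f r
  set v := deriv (deriv f) r
  set S := √(1 + u ^ 2)
  have hD : HasDerivAt (fun s => odeRHS c lam s (f s) (deriv f s) * (1 + deriv f s ^ 2))
      ((c / r ^ 2 * u + (r - c / r) * v + lam * (u * v / S)) * (1 + u ^ 2)
        + odeRHS c lam r (f r) u * (2 * u * v)) r :=
    ((hf.hasDerivAt.odeRHS hr0.ne' hf'.hasDerivAt).mul
      ((hasDerivAt_const r (1 : ℝ)).add (hf'.hasDerivAt.pow 2))).congr_deriv
      (by simp only [Pi.add_apply, Pi.pow_apply]; push_cast; ring)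
  have heq : deriv (deriv f) =ᶠ[𝓝 r]
      fun s => odeRHS c lam s (f s) (deriv f s) * (1 + deriv f s ^ 2) :=
    eventually_of_mem (Icc_mem_nhds hr.1 hr.2) hode
  rw [heq.deriv_eq, hD.deriv]
  have hu : u < 0 := hneg r hrO
  have hv : v < 0 :=
    (deriv_deriv_lt_neg ha hca hlam hode hpos hneg hrO).trans (by linarith [hpos r hrO])
  have hF : odeRHS c lam r (f r) u < 0 := by
    linarith [odeRHS_le (y := f r) (coeff_nonneg ha hca hr.1.le) hu.le hlam, hpos r hrO]
  have huv : 0 < u * v := mul_pos_of_neg_of_neg hu hv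
  have hF' : c / r ^ 2 * u + (r - c / r) * v + lam * (u * v / S) < 0 := by
    have h1 : c / r ^ 2 * u ≤ 0 := mul_nonpos_of_nonneg_of_nonpos (by positivity) hu.le
    have h2 : (r - c / r) * v ≤ 0 :=
      mul_nonpos_of_nonneg_of_nonpos (coeff_nonneg ha hca hr.1.le) hv.le
    have h3 : lam * (u * v / S) < 0 :=
      mul_neg_of_neg_of_pos hlam (div_pos huv (Real.sqrt_pos.2 (by positivity)))
    linarith
  nlinarith [mul_neg_of_neg_of_pos hF' (by positivity : (0 : ℝ) < 1 + u ^ 2)]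

lemma deriv_deriv_lt_neg_left (hc : 0 ≤ c) (hreg : ∀ r ∈ Icc a b, DifferentiableAt ℝ f r ∧
      DifferentiableAt ℝ (deriv f) r ∧ DifferentiableAt ℝ (deriv (deriv f)) r)
    {r : ℝ} (hr : r ∈ Ioo a b) : deriv (deriv f) r < -f a := by
  have hab : a < b := hr.1.trans hr.2
  have hanti : StrictAntiOn (deriv (deriv f)) (Icc a b) :=
    strictAntiOn_Icc_of_hasDerivAt_neg (fun r hr => (hreg r hr).2.2.hasDerivAt)
      fun r hr => deriv_deriv_deriv_neg ha hca hlam hode hpos hneg hc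
        (fun r hr => ⟨(hreg r hr).1, (hreg r hr).2.1⟩) hr
  calc deriv (deriv f) r < deriv (deriv f) a :=
        hanti (left_mem_Icc.2 hab.le) (Ioo_subset_Icc_self hr) hr.1
    _ < -f a := deriv_deriv_lt_neg ha hca hlam hode hpos hneg (left_mem_Ico.2 hab)

theorem le_mul_one_sub_sq_div_two (hc : 0 ≤ c) (hab : a < b)
    (hreg : ∀ r ∈ Icc a b, DifferentiableAt ℝ f r ∧
      DifferentiableAt ℝ (deriv f) r ∧ DifferentiableAt ℝ (deriv (deriv f)) r) :
    f b ≤ f a * (1 - (b - a) ^ 2 / 2) := by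
  have hbound := le_of_deriv_deriv_le hab.le (fun r hr => (hreg r hr).1)
    (fun r hr => (hreg r hr).2.1)
    fun r hr => (deriv_deriv_lt_neg_left ha hca hlam hode hpos hneg hc hreg hr).le
  have hslope : deriv f a * (b - a) ≤ 0 :=
    mul_nonpos_of_nonpos_of_nonneg (hneg a (left_mem_Ico.2 hab)).le (sub_nonneg.2 hab.le)
  linarith

end NegativeSlope

/-- For `λ < 0` and `b ≥ √(n−1) + √2`, a C³ solution of
`f''/(1+(f')²) = (r − (n−1)/r)f' − f + λ√(1+(f')²)` on `[b−√2, b]` with `f(b) > 0` has a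
point `c ∈ [b−√2, b)` with `f'(c) ≥ 0`. -/
theorem stmt_15 (n : ℕ) (hn : 2 ≤ n) (lam b : ℝ) (hlam : lam < 0)
    (hb : Real.sqrt ((n : ℝ) - 1) + Real.sqrt 2 ≤ b)
    (f : ℝ → ℝ)
    (hreg : ∀ r ∈ Set.Icc (b - Real.sqrt 2) b,
      DifferentiableAt ℝ f r ∧ DifferentiableAt ℝ (deriv f) r ∧
        DifferentiableAt ℝ (deriv (deriv f)) r)
    (hode : ∀ r ∈ Set.Icc (b - Real.sqrt 2) b,
      deriv (deriv f) r / (1 + (deriv f r) ^ 2) =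
        (r - ((n : ℝ) - 1) / r) * deriv f r - f r + lam * Real.sqrt (1 + (deriv f r) ^ 2))
    (hfb : 0 < f b) :
    ∃ c ∈ Set.Ico (b - Real.sqrt 2) b, 0 ≤ deriv f c := by
  by_contra! hneg
  set a := b - √2
  have hab : a < b := sub_lt_self b (by positivity)
  have hn1 : (1 : ℝ) ≤ n - 1 := by
    have : (2 : ℝ) ≤ n := by exact_mod_cast hn
    linarith
  have hsqrt : √((n : ℝ) - 1) ≤ a := by linarith
  have ha : 0 < a := (Real.sqrt_pos.2 (by linarith)).trans_le hsqrt
  have hca : (n : ℝ) - 1 ≤ a ^ 2 := (Real.sqrt_le_left ha.le).1 hsqrt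
  have hpos : ∀ r ∈ Ico a b, 0 < f r := fun r hr =>
    hfb.trans (strictAntiOn_Icc_of_hasDerivAt_neg (fun r hr => (hreg r hr).1.hasDerivAt)
      (fun r hr => hneg r (Ioo_subset_Ico_self hr)) (Ico_subset_Icc_self hr)
      (right_mem_Icc.2 hab.le) hr.2)
  have hode' : ∀ r ∈ Icc a b, deriv (deriv f) r =
      odeRHS ((n : ℝ) - 1) lam r (f r) (deriv f r) * (1 + deriv f r ^ 2) := fun r hr =>
    (div_eq_iff (by positivity)).1 (hode r hr)
  have hfb_le := NegativeSlope.le_mul_one_sub_sq_div_two ha hca hlam hode' hpos hneg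
    (by linarith) hab hreg
  simp only [a, sub_sub_cancel, Real.sq_sqrt zero_le_two] at hfb_le
  linarith
end
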